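/- arXiv:2110.08852 — 4 statements merged into one kernel-verified Lean document; each statement's English description precedes it below -/
import Mathlib

section
/- Let {P_n,…,P_1} be a tower in a finite solvable group G. If G = P_n⋯P_1, then ρ_{n-1}(G) = P_n, where ρ_0(G)=G, ρ_1(G) is the intersection of the lower central series of G, and ρ_k(G)=ρ_1(ρ_{k-1}(G)) for k ≥ 2. -/
open Pointwise

/-- The Fitting subgroup of a group: the largest nilpotent normal subgroup
(defined as the join of all nilpotent normal subgroups). -/
def FittingSubgroup (G : Type*) [Group G] : Subgroup G :=
  sSup {H : Subgroup G | H.Normal ∧ Group.IsNilpotent H}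

theorem FittingSubgroup_normal (G : Type*) [Group G] : (FittingSubgroup G).Normal := by
  constructor
  intro x hx g
  rw [FittingSubgroup, sSup_eq_iSup'] at hx ⊢
  refine Subgroup.iSup_induction _ (C := fun y => g * y * g⁻¹ ∈ _) hx ?_ ?_ ?_
  · rintro ⟨H, hHn, hHnil⟩ y hy
    exact Subgroup.mem_iSup_of_mem ⟨H, hHn, hHnil⟩ (hHn.conj_mem y hy g)
  · simpa using Subgroup.one_mem _
  · intro y z hy hz
    have h : g * (y * z) * g⁻¹ = g * y * g⁻¹ * (g * z * g⁻¹) := by group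
    rw [h]; exact Subgroup.mul_mem _ hy hz

/-- The Fitting series of a group, together with the proof of normality of its terms:
`F 0 = ⊥` and `F (i+1) / F i = FittingSubgroup (G ⧸ F i)`. -/
noncomputable def fittingSeriesAux (G : Type*) [Group G] : ℕ → {H : Subgroup G // H.Normal}
  | 0 => ⟨⊥, inferInstance⟩
  | n + 1 =>
    let N := fittingSeriesAux G n
    haveI : N.1.Normal := N.2
    ⟨(FittingSubgroup (G ⧸ N.1)).comap (QuotientGroup.mk' N.1),
      (FittingSubgroup_normal _).comap _⟩

/-- The Fitting series of a group. -/
noncomputable def fittingSeries (G : Type*) [Group G] (n : ℕ) : Subgroup G :=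
  (fittingSeriesAux G n).1

/-- The Fitting height: the least `n` with `fittingSeries G n = ⊤`. -/
noncomputable def fittingHeight (G : Type*) [Group G] : ℕ :=
  sInf {n | fittingSeries G n = ⊤}

/-- `rho G 0 = G`, `rho G 1 = ⋂ i, γ_i(G)` (the nilpotent residual), and
`rho G (k+1) = ρ₁(rho G k)` viewed as a subgroup of `G`. -/
noncomputable def rho (G : Type*) [Group G] : ℕ → Subgroup G
  | 0 => ⊤
  | n + 1 => Subgroup.map (rho G n).subtype (⨅ i : ℕ, (⊤ : Subgroup (rho G n)).lowerCentralSeries i)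

/-- `Ω m`: the number of prime divisors of `m`, counted with multiplicity. -/
def bigOmega (m : ℕ) : ℕ := m.primeFactorsList.length

/-- A Fermat prime is a prime of the form `2 ^ 2 ^ k + 1`. -/
def IsFermatPrime (p : ℕ) : Prop := p.Prime ∧ ∃ k : ℕ, p = 2 ^ 2 ^ k + 1

open Classical in
/-- `Ω₁ m`: the number of odd Fermat prime divisors of `m`, counted with multiplicity. -/
noncomputable def bigOmegaOne (m : ℕ) : ℕ :=
  (m.primeFactorsList.filter fun p => Odd p ∧ IsFermatPrime p).length

/-- A tower of height `n` in `G`: subgroups `P n, …, P 1` such that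
(1) each `P i` is a non-trivial `p i`-group with `p (i+1) ≠ p i`,
(2) `P i` normalizes `P j` for `i < j`, and
(3) with `C n = 1` and `C i = C_{P i}(P (i+1) / C (i+1))`, one has
`[P i / C i, P (i-1)] = P i / C i`, expressed as `⁅P i, P (i-1)⁆ ⊔ C i = P i`. -/
def IsTower {G : Type*} [Group G] (n : ℕ) (P : ℕ → Subgroup G) : Prop :=
  (∀ i, 1 ≤ i → i ≤ n → P i ≠ ⊥) ∧
  (∃ p : ℕ → ℕ,
    (∀ i, 1 ≤ i → i ≤ n → (p i).Prime ∧ IsPGroup (p i) (P i)) ∧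
    (∀ i, 1 ≤ i → i + 1 ≤ n → p (i + 1) ≠ p i)) ∧
  (∀ i j, 1 ≤ i → i < j → j ≤ n → ∀ x ∈ P i, ∀ y ∈ P j, x * y * x⁻¹ ∈ P j) ∧
  (∃ C : ℕ → Subgroup G,
    C n = ⊥ ∧
    (∀ i, 1 ≤ i → i < n →
      (C i : Set G) = {x | x ∈ P i ∧ ∀ y ∈ P (i + 1), x * y * x⁻¹ * y⁻¹ ∈ C (i + 1)}) ∧
    (∀ i, 2 ≤ i → i ≤ n → ⁅P i, P (i - 1)⁆ ⊔ C i = P i))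

/-- A weak tower: as a tower, but with condition (3) replaced by the non-triviality
of all the quotients `P i / C i`. -/
def IsWeakTower {G : Type*} [Group G] (n : ℕ) (P : ℕ → Subgroup G) : Prop :=
  (∃ p : ℕ → ℕ,
    (∀ i, 1 ≤ i → i ≤ n → (p i).Prime ∧ IsPGroup (p i) (P i)) ∧
    (∀ i, 1 ≤ i → i + 1 ≤ n → p (i + 1) ≠ p i)) ∧
  (∀ i j, 1 ≤ i → i < j → j ≤ n → ∀ x ∈ P i, ∀ y ∈ P j, x * y * x⁻¹ ∈ P j) ∧
  (∃ C : ℕ → Subgroup G,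
    C n = ⊥ ∧
    (∀ i, 1 ≤ i → i < n →
      (C i : Set G) = {x | x ∈ P i ∧ ∀ y ∈ P (i + 1), x * y * x⁻¹ * y⁻¹ ∈ C (i + 1)}) ∧
    (∀ i, 1 ≤ i → i ≤ n → C i ≠ P i))

open scoped Pointwise in
/-- `mulFrom P n k` is the setwise product `P n * P (n-1) * ⋯ * P (n - k + 1)`;
in particular `mulFrom P n n = P n * ⋯ * P 1`. -/
def mulFrom {G : Type*} [Group G] (P : ℕ → Subgroup G) (n : ℕ) : ℕ → Set G
  | 0 => 1
  | k + 1 => mulFrom P n k * (P (n - k) : Set G)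

open Classical in
/-- The `p`-length of `G`: the least number of (non-trivial) `p`-factors in a normal series
of `G` all of whose factors are `p`-groups or `p'`-groups. -/
noncomputable def pLength (p : ℕ) (G : Type*) [Group G] : ℕ :=
  sInf {l | ∃ (k : ℕ) (N : ℕ → Subgroup G),
    N 0 = ⊥ ∧ N k = ⊤ ∧ (∀ i, i < k → N i ≤ N (i + 1)) ∧ (∀ i, (N i).Normal) ∧
    (∀ i, i < k →
      (∀ x ∈ N (i + 1), ∃ m : ℕ, x ^ p ^ m ∈ N i) ∨
      (∀ x ∈ N (i + 1), ∃ m : ℕ, 0 < m ∧ m.Coprime p ∧ x ^ m ∈ N i)) ∧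
    l = ((Finset.range k).filter fun i =>
      (∀ x ∈ N (i + 1), ∃ m : ℕ, x ^ p ^ m ∈ N i) ∧ N i ≠ N (i + 1)).card}


section AuxiliaryLemmas
open Pointwise Subgroup
open scoped commutatorElement


namespace TowerAux

variable {G : Type*} [Group G] {G' : Type*} [Group G']

/-- lower central series of a subgroup inside the ambient group -/
def lcsIn (K : Subgroup G) : ℕ → Subgroup G
  | 0 => K
  | i + 1 => ⁅lcsIn K i, K⁆

/-- nilpotent residual of a subgroup, inside the ambient group -/
def resS (K : Subgroup G) : Subgroup G := ⨅ i, lcsIn K i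

/-- iterated nilpotent residual -/
def rhoS (K : Subgroup G) : ℕ → Subgroup G
  | 0 => K
  | k + 1 => resS (rhoS K k)

lemma resS_le (K : Subgroup G) : resS K ≤ K := (iInf_le _ 0)

lemma lcsIn_mono {K L : Subgroup G} (h : K ≤ L) (i : ℕ) : lcsIn K i ≤ lcsIn L i := by
  induction i with
  | zero => exact h
  | succ i ih => exact commutator_mono ih h

lemma resS_mono {K L : Subgroup G} (h : K ≤ L) : resS K ≤ resS L :=
  le_iInf fun i => (iInf_le _ i).trans (lcsIn_mono h i)

lemma rhoS_mono {K L : Subgroup G} (h : K ≤ L) (k : ℕ) : rhoS K k ≤ rhoS L k := by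
  induction k with
  | zero => exact h
  | succ k ih => exact resS_mono ih

lemma rhoS_succ_eq (K : Subgroup G) (k : ℕ) : rhoS K (k + 1) = rhoS (resS K) k := by
  induction k with
  | zero => rfl
  | succ k ih => show resS _ = resS _; rw [ih]

lemma map_iInf_of_injective (f : G →* G') (hf : Function.Injective f) (s : ℕ → Subgroup G) :
    Subgroup.map f (⨅ i, s i) = ⨅ i, Subgroup.map f (s i) := by
  apply le_antisymm
  · exact le_iInf fun i => Subgroup.map_mono (iInf_le _ i)
  · intro x hx
    simp only [Subgroup.mem_iInf, Subgroup.mem_map] at hx ⊢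
    obtain ⟨a, ha0, rfl⟩ := hx 0
    refine ⟨a, fun i => ?_, rfl⟩
    obtain ⟨b, hb, hba⟩ := hx i
    rwa [show b = a from hf hba] at hb

lemma map_subtype_lcs (K : Subgroup G) (i : ℕ) :
    Subgroup.map K.subtype ((⊤ : Subgroup K).lowerCentralSeries i) = lcsIn K i := by
  induction i with
  | zero =>
    show Subgroup.map K.subtype ⊤ = K
    rw [← MonoidHom.range_eq_map, Subgroup.range_subtype]
  | succ i ih =>
    show Subgroup.map K.subtype ⁅(⊤ : Subgroup K).lowerCentralSeries i, ⊤⁆ = _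
    rw [Subgroup.map_commutator, ih]
    congr 1
    rw [← MonoidHom.range_eq_map, Subgroup.range_subtype]

lemma map_subtype_resS (K : Subgroup G) :
    Subgroup.map K.subtype (⨅ i, (⊤ : Subgroup K).lowerCentralSeries i) = resS K := by
  rw [map_iInf_of_injective K.subtype K.subtype_injective]
  simp only [map_subtype_lcs]
  rfl

lemma lcsIn_map (f : G →* G') (K : Subgroup G) (i : ℕ) :
    Subgroup.map f (lcsIn K i) = lcsIn (Subgroup.map f K) i := by
  induction i with
  | zero => rfl
  | succ i ih => show Subgroup.map f ⁅_, _⁆ = ⁅_, _⁆; rw [Subgroup.map_commutator, ih]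

lemma resS_map (f : G →* G') (hf : Function.Injective f) (K : Subgroup G) :
    Subgroup.map f (resS K) = resS (Subgroup.map f K) := by
  rw [resS, map_iInf_of_injective f hf]
  simp only [lcsIn_map]
  rfl

lemma rhoS_map (f : G →* G') (hf : Function.Injective f) (K : Subgroup G) (k : ℕ) :
    Subgroup.map f (rhoS K k) = rhoS (Subgroup.map f K) k := by
  induction k with
  | zero => rfl
  | succ k ih => show Subgroup.map f (resS _) = resS _; rw [resS_map f hf, ih]

lemma rhoS_top_normal (k : ℕ) : (rhoS (⊤ : Subgroup G) k).Normal := by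
  constructor
  intro x hx g
  have hconj : Subgroup.map (MulAut.conj g).toMonoidHom (rhoS (⊤ : Subgroup G) k)
      = rhoS (⊤ : Subgroup G) k := by
    rw [rhoS_map _ (MulAut.conj g).injective]
    congr 1
    exact Subgroup.map_top_of_surjective _ (MulAut.conj g).surjective
  rw [← hconj]
  exact ⟨x, hx, rfl⟩

lemma lcs_map_surjective (f : G →* G') (hf : Function.Surjective f) (n : ℕ) :
    Subgroup.map f ((⊤ : Subgroup G).lowerCentralSeries n) = (⊤ : Subgroup G').lowerCentralSeries n := by
  induction n with
  | zero =>
    show Subgroup.map f ⊤ = ⊤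
    rw [← MonoidHom.range_eq_map]
    exact f.range_eq_top_of_surjective hf
  | succ n ih =>
    show Subgroup.map f ⁅(⊤ : Subgroup G).lowerCentralSeries n, ⊤⁆ = ⁅(⊤ : Subgroup G').lowerCentralSeries n, ⊤⁆
    rw [Subgroup.map_commutator, ih]
    congr 1
    rw [← MonoidHom.range_eq_map]
    exact f.range_eq_top_of_surjective hf

/-- the nilpotent residual of a group -/
def resid (X : Type*) [Group X] : Subgroup X := ⨅ i, (⊤ : Subgroup X).lowerCentralSeries i

instance resid_normal (X : Type*) [Group X] : (resid X).Normal := by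
  constructor
  intro x hx g
  rw [resid, Subgroup.mem_iInf] at hx ⊢
  exact fun i => (Subgroup.lowerCentralSeries_normal ⊤ i).conj_mem x (hx i) g

lemma map_subtype_resid (K : Subgroup G) : Subgroup.map K.subtype (resid ↥K) = resS K :=
  map_subtype_resS K

lemma exists_lcs_eq_resid (X : Type*) [Group X] [Finite X] :
    ∃ m : ℕ, (⊤ : Subgroup X).lowerCentralSeries m = resid X := by
  have hanti := Subgroup.lowerCentralSeries_antitone (⊤ : Subgroup X)
  obtain ⟨i, j, hne, hij⟩ := Finite.exists_ne_map_eq_of_infinite (⊤ : Subgroup X).lowerCentralSeries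
  have key : ∃ k : ℕ, (⊤ : Subgroup X).lowerCentralSeries (k+1) = (⊤ : Subgroup X).lowerCentralSeries k := by
    rcases hne.lt_or_gt with h | h
    · exact ⟨i, le_antisymm (hanti (Nat.le_succ i)) (hij ▸ hanti h)⟩
    · exact ⟨j, le_antisymm (hanti (Nat.le_succ j)) (hij ▸ hanti h)⟩
  obtain ⟨k, hstab⟩ := key
  have hconst : ∀ m, k ≤ m → (⊤ : Subgroup X).lowerCentralSeries m = (⊤ : Subgroup X).lowerCentralSeries k := by
    intro m hm
    induction m with
    | zero => rw [Nat.le_zero.mp hm]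
    | succ m ihm =>
      rcases Nat.lt_or_ge k (m+1) with h' | h'
      · have him : k ≤ m := by omega
        show ⁅(⊤ : Subgroup X).lowerCentralSeries m, ⊤⁆ = _
        rw [ihm him]
        exact hstab
      · rw [Nat.le_antisymm hm h']
  refine ⟨k, le_antisymm (le_iInf fun m => ?_) (iInf_le _ k)⟩
  rcases le_or_gt m k with h' | h'
  · exact hanti h'
  · rw [hconst m h'.le]

lemma nilpotent_quotient_resid (X : Type*) [Group X] [Finite X] :
    Group.IsNilpotent (X ⧸ resid X) := by
  obtain ⟨m, hm⟩ := exists_lcs_eq_resid X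
  rw [Subgroup.nilpotent_iff_lowerCentralSeries]
  refine ⟨m, ?_⟩
  rw [← lcs_map_surjective (QuotientGroup.mk' (resid X)) (QuotientGroup.mk'_surjective _) m, hm]
  rw [Subgroup.map_eq_bot_iff, QuotientGroup.ker_mk']

lemma resid_le_of_quotient_nilpotent {X : Type*} [Group X] (N : Subgroup X) [N.Normal]
    (h : Group.IsNilpotent (X ⧸ N)) : resid X ≤ N := by
  obtain ⟨m, hm⟩ := Subgroup.nilpotent_iff_lowerCentralSeries.mp h
  have h1 : Subgroup.map (QuotientGroup.mk' N) ((⊤ : Subgroup X).lowerCentralSeries m) = ⊥ := by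
    rw [lcs_map_surjective (QuotientGroup.mk' N) (QuotientGroup.mk'_surjective _) m, hm]
  rw [Subgroup.map_eq_bot_iff, QuotientGroup.ker_mk'] at h1
  exact (iInf_le _ m).trans h1

lemma pgroup_inf_eq_bot {p q : ℕ} (hp : p.Prime) (hq : q.Prime) (hpq : p ≠ q)
    {A B : Subgroup G} (hA : IsPGroup p A) (hB : IsPGroup q B) : A ⊓ B = ⊥ := by
  rw [eq_bot_iff]
  intro x hx
  obtain ⟨k, hk⟩ := hA ⟨x, hx.1⟩
  obtain ⟨l, hl⟩ := hB ⟨x, hx.2⟩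
  have hk' : x ^ p ^ k = 1 := by
    have := congrArg (Subgroup.subtype A) hk
    simpa using this
  have hl' : x ^ q ^ l = 1 := by
    have := congrArg (Subgroup.subtype B) hl
    simpa using this
  have h1 : orderOf x ∣ p ^ k := orderOf_dvd_of_pow_eq_one hk'
  have h2 : orderOf x ∣ q ^ l := orderOf_dvd_of_pow_eq_one hl'
  have hcop : Nat.Coprime (p ^ k) (q ^ l) :=
    Nat.Coprime.pow k l ((Nat.coprime_primes hp hq).mpr hpq)
  have : orderOf x ∣ 1 := hcop ▸ Nat.dvd_gcd h1 h2
  simp only [Nat.dvd_one] at this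
  have := orderOf_eq_one_iff.mp this
  simpa [Subgroup.mem_bot] using this

lemma commutator_eq_bot_of_nilpotent {Q : Type*} [Group Q] [Finite Q]
    (hQ : Group.IsNilpotent Q) {p q : ℕ} (hp : p.Prime) (hq : q.Prime) (hpq : p ≠ q)
    (A B : Subgroup Q) (hA : IsPGroup p A) (hB : IsPGroup q B) : ⁅A, B⁆ = ⊥ := by
  haveI : Fact p.Prime := ⟨hp⟩
  haveI : Fact q.Prime := ⟨hq⟩
  obtain ⟨P, hAP⟩ := hA.exists_le_sylow
  obtain ⟨S, hBS⟩ := hB.exists_le_sylow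
  have h03 : Group.IsNilpotent Q ↔
      ∀ (p : ℕ) (_hp : Fact p.Prime) (P : Sylow p Q), (↑P : Subgroup Q).Normal :=
    (isNilpotent_of_finite_tfae (G := Q)).out 0 3
  haveI hPn : (P : Subgroup Q).Normal := h03.mp hQ p ⟨hp⟩ P
  haveI hSn : (S : Subgroup Q).Normal := h03.mp hQ q ⟨hq⟩ S
  have h1 : ⁅A, B⁆ ≤ (P : Subgroup Q) ⊓ (S : Subgroup Q) :=
    le_inf ((commutator_mono hAP hBS).trans (Subgroup.commutator_le_left _ _))
      ((commutator_mono hAP hBS).trans (Subgroup.commutator_le_right _ _))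
  rw [pgroup_inf_eq_bot hp hq hpq P.isPGroup' S.isPGroup'] at h1
  exact le_bot_iff.mp h1

/-- set product formula when the left factor normalizes the right one -/
lemma coe_sup_of_norm_right (A C : Subgroup G) (h : ∀ a ∈ A, ∀ c ∈ C, a * c * a⁻¹ ∈ C) :
    (↑(A ⊔ C) : Set G) = (A : Set G) * (C : Set G) := by
  let S : Subgroup G :=
    { carrier := (A : Set G) * (C : Set G)
      one_mem' := ⟨1, A.one_mem, 1, C.one_mem, by simp⟩
      mul_mem' := by
        rintro x y ⟨a, ha, c, hc, rfl⟩ ⟨a', ha', c', hc', rfl⟩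
        refine ⟨a * a', A.mul_mem ha ha', (a'⁻¹ * c * a') * c', C.mul_mem ?_ hc', by group⟩
        simpa using h a'⁻¹ (A.inv_mem ha') c hc
      inv_mem' := by
        rintro x ⟨a, ha, c, hc, rfl⟩
        exact ⟨a⁻¹, A.inv_mem ha, a * c⁻¹ * a⁻¹, h a ha c⁻¹ (C.inv_mem hc), by group⟩ }
  apply le_antisymm
  · exact (sup_le (fun a ha => ⟨a, ha, 1, C.one_mem, by simp⟩)
      (fun c hc => ⟨1, A.one_mem, c, hc, by simp⟩) : A ⊔ C ≤ S)
  · rintro _ ⟨a, ha, c, hc, rfl⟩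
    exact Subgroup.mul_mem _ (Subgroup.mem_sup_left ha) (Subgroup.mem_sup_right hc)

/-- set product formula when the right factor normalizes the left one -/
lemma coe_sup_of_norm_left (A C : Subgroup G) (h : ∀ c ∈ C, ∀ a ∈ A, c * a * c⁻¹ ∈ A) :
    (↑(A ⊔ C) : Set G) = (A : Set G) * (C : Set G) := by
  let S : Subgroup G :=
    { carrier := (A : Set G) * (C : Set G)
      one_mem' := ⟨1, A.one_mem, 1, C.one_mem, by simp⟩
      mul_mem' := by
        rintro x y ⟨a, ha, c, hc, rfl⟩ ⟨a', ha', c', hc', rfl⟩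
        exact ⟨a * (c * a' * c⁻¹), A.mul_mem ha (h c hc a' ha'), c * c',
          C.mul_mem hc hc', by group⟩
      inv_mem' := by
        rintro x ⟨a, ha, c, hc, rfl⟩
        refine ⟨c⁻¹ * a⁻¹ * c, ?_, c⁻¹, C.inv_mem hc, by group⟩
        simpa using h c⁻¹ (C.inv_mem hc) a⁻¹ (A.inv_mem ha) }
  apply le_antisymm
  · exact (sup_le (fun a ha => ⟨a, ha, 1, C.one_mem, by simp⟩)
      (fun c hc => ⟨1, A.one_mem, c, hc, by simp⟩) : A ⊔ C ≤ S)
  · rintro _ ⟨a, ha, c, hc, rfl⟩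
    exact Subgroup.mul_mem _ (Subgroup.mem_sup_left ha) (Subgroup.mem_sup_right hc)

end TowerAux

namespace TowerAux

variable {G : Type*} [Group G]

lemma tower_C_conj (n : ℕ) (P C : ℕ → Subgroup G)
    (hnorm : ∀ i j, 1 ≤ i → i < j → j ≤ n → ∀ x ∈ P i, ∀ y ∈ P j, x * y * x⁻¹ ∈ P j)
    (hCn : C n = ⊥)
    (hCdef : ∀ i, 1 ≤ i → i < n →
      (C i : Set G) = {x | x ∈ P i ∧ ∀ y ∈ P (i + 1), x * y * x⁻¹ * y⁻¹ ∈ C (i + 1)}) :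
    ∀ d m, n - m = d → 1 ≤ m → m ≤ n → ∀ j, 1 ≤ j → j ≤ m →
      ∀ g ∈ P j, ∀ x ∈ C m, g * x * g⁻¹ ∈ C m := by
  intro d
  induction d with
  | zero =>
    intro m hd h1 h2 j hj1 hj2 g hg x hx
    have hmn : m = n := by omega
    subst hmn
    rw [hCn] at hx ⊢
    simp only [Subgroup.mem_bot] at hx ⊢
    simp [hx]
  | succ d ih =>
    intro m hd h1 h2 j hj1 hj2 g hg x hx
    have hmn : m < n := by omega
    have hmem := Set.ext_iff.mp (hCdef m h1 hmn)
    obtain ⟨hxP, hxc⟩ := (hmem x).mp hx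
    refine (hmem _).mpr ⟨?_, ?_⟩
    · rcases eq_or_lt_of_le hj2 with rfl | hlt
      · exact (P j).mul_mem ((P j).mul_mem hg hxP) ((P j).inv_mem hg)
      · exact hnorm j m hj1 hlt (le_of_lt hmn) g hg x hxP
    · intro y hy
      have hy' : g⁻¹ * y * g ∈ P (m + 1) := by
        have := hnorm j (m + 1) hj1 (by omega) (by omega) g⁻¹ ((P j).inv_mem hg) y hy
        simpa using this
      have hxy := hxc _ hy'
      have hcc : g * (x * (g⁻¹ * y * g) * x⁻¹ * (g⁻¹ * y * g)⁻¹) * g⁻¹ ∈ C (m + 1) :=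
        ih (m + 1) (by omega) (by omega) (by omega) j hj1 (by omega) g hg _ hxy
      have heq : g * x * g⁻¹ * y * (g * x * g⁻¹)⁻¹ * y⁻¹
          = g * (x * (g⁻¹ * y * g) * x⁻¹ * (g⁻¹ * y * g)⁻¹) * g⁻¹ := by group
      rw [heq]; exact hcc

lemma tower_lower [Finite G] (n : ℕ) (hn : 1 ≤ n) (P : ℕ → Subgroup G) (hT : IsTower n P) :
    P n ≤ rhoS (⊤ : Subgroup G) (n - 1) := by
  obtain ⟨hP1, ⟨p, hp, hpp⟩, hnorm, ⟨C, hCn, hCdef, hCcomm⟩⟩ := hT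
  have hCconj' : ∀ m j, 1 ≤ j → j ≤ m → m ≤ n → ∀ g ∈ P j, ∀ x ∈ C m, g * x * g⁻¹ ∈ C m :=
    fun m j hj hjm hmn g hg x hx =>
      tower_C_conj n P C hnorm hCn hCdef (n - m) m rfl (le_trans hj hjm) hmn j hj hjm g hg x hx
  have hCle : ∀ i, 1 ≤ i → i ≤ n → C i ≤ P i := by
    intro i h1 h2
    rcases eq_or_lt_of_le h2 with rfl | hlt
    · rw [hCn]; exact bot_le
    · intro x hx
      exact ((Set.ext_iff.mp (hCdef i h1 hlt) x).mp hx).1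
  have hcomC : ∀ i, 2 ≤ i → i ≤ n → ∀ x ∈ P i, ∀ c ∈ C (i - 1), x * c * x⁻¹ * c⁻¹ ∈ C i := by
    intro i h2 hin x hx c hc
    have h1 : 1 ≤ i - 1 := by omega
    have h2' : i - 1 < n := by omega
    have hmem := Set.ext_iff.mp (hCdef (i - 1) h1 h2')
    have hstep := ((hmem c).mp hc).2 x (by rw [show i - 1 + 1 = i by omega]; exact hx)
    rw [show i - 1 + 1 = i by omega] at hstep
    have hinv : (c * x * c⁻¹ * x⁻¹)⁻¹ ∈ C i := (C i).inv_mem hstep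
    have heq : x * c * x⁻¹ * c⁻¹ = (c * x * c⁻¹ * x⁻¹)⁻¹ := by group
    rw [heq]; exact hinv
  have main : ∀ k, k ≤ n - 1 → ∀ i, k + 1 ≤ i → i ≤ n →
      P i ≤ rhoS (⊤ : Subgroup G) k ⊔ C i := by
    intro k
    induction k with
    | zero => intro _ i _ _; exact le_trans le_top le_sup_left
    | succ k ih =>
      intro hk i0 hi0 hi0n
      set S := rhoS (⊤ : Subgroup G) k with hS
      set S' := rhoS (⊤ : Subgroup G) (k + 1) with hS'
      haveI hSnormal : S.Normal := rhoS_top_normal k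
      haveI hS'normal : S'.Normal := rhoS_top_normal (k + 1)
      have hS'def : S' = resS S := rfl
      have ihk := ih (by omega)
      have hk2n : k + 2 ≤ n := by omega
      -- Step A : decomposition P i = (P i ⊓ S) * C i
      have stepA : ∀ i, k + 1 ≤ i → i ≤ n → ∀ x ∈ P i,
          ∃ t, t ∈ P i ⊓ S ∧ ∃ c ∈ C i, x = t * c := by
        intro i hi hin x hx
        have h1 : x ∈ S ⊔ C i := ihk i hi hin hx
        rw [← SetLike.mem_coe, Subgroup.normal_mul] at h1
        obtain ⟨s, hs, c, hc, rfl⟩ := h1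
        refine ⟨s, ⟨?_, hs⟩, c, hc, rfl⟩
        have := (P i).mul_mem hx ((P i).inv_mem (hCle i (by omega) hin hc))
        simpa using this
      -- Step B : P i ≤ [P i ⊓ S, P (i-1) ⊓ S] ⊔ C i
      have stepB : ∀ i, k + 2 ≤ i → i ≤ n →
          P i ≤ ⁅P i ⊓ S, P (i - 1) ⊓ S⁆ ⊔ C i := by
        intro i hi hin
        have h1i : 1 ≤ i - 1 := by omega
        have hi1n : i - 1 ≤ n := by omega
        have hii : i - 1 < i := by omega
        have hB2 : ⁅P i, P (i - 1) ⊓ S⁆ ≤ ⁅P i ⊓ S, P (i - 1) ⊓ S⁆ ⊔ C i := by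
          rw [Subgroup.commutator_le]
          intro x hx t ht
          obtain ⟨s, hsPS, c, hc, rfl⟩ := stepA i (by omega) hin x hx
          have heq : ⁅s * c, t⁆ = s * (c * t * c⁻¹ * t⁻¹) * s⁻¹ * ⁅s, t⁆ := by
            simp only [commutatorElement_def]; group
          rw [heq]
          have hct : c * t * c⁻¹ * t⁻¹ ∈ C i := by
            have h2 : t * c⁻¹ * t⁻¹ ∈ C i :=
              hCconj' i (i - 1) h1i (by omega) hin t ht.1 c⁻¹ ((C i).inv_mem hc)
            have heq2 : c * t * c⁻¹ * t⁻¹ = c * (t * c⁻¹ * t⁻¹) := by group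
            rw [heq2]; exact (C i).mul_mem hc h2
          have hsct : s * (c * t * c⁻¹ * t⁻¹) * s⁻¹ ∈ C i :=
            hCconj' i i (by omega) le_rfl hin s hsPS.1 _ hct
          exact Subgroup.mul_mem _ (Subgroup.mem_sup_right hsct)
            (Subgroup.mem_sup_left (Subgroup.commutator_mem_commutator hsPS ht))
        have hB1 : ⁅P i, P (i - 1)⁆ ≤ ⁅P i, P (i - 1) ⊓ S⁆ ⊔ C i := by
          rw [Subgroup.commutator_le]
          intro x hx q hq
          obtain ⟨t, htPS, c, hc, rfl⟩ := stepA (i - 1) (by omega) hi1n q hq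
          have heq : ⁅x, t * c⁆ = ⁅x, t⁆ * (t * (x * c * x⁻¹ * c⁻¹) * t⁻¹) := by
            simp only [commutatorElement_def]; group
          rw [heq]
          have hxc : x * c * x⁻¹ * c⁻¹ ∈ C i := hcomC i (by omega) hin x hx c hc
          have htxc : t * (x * c * x⁻¹ * c⁻¹) * t⁻¹ ∈ C i :=
            hCconj' i (i - 1) h1i (by omega) hin t htPS.1 _ hxc
          exact Subgroup.mul_mem _
            (Subgroup.mem_sup_left (Subgroup.commutator_mem_commutator hx htPS))
            (Subgroup.mem_sup_right htxc)
        have h0 : P i ≤ ⁅P i, P (i - 1)⁆ ⊔ C i := le_of_eq (hCcomm i (by omega) hin).symm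
        calc P i ≤ ⁅P i, P (i - 1)⁆ ⊔ C i := h0
          _ ≤ (⁅P i, P (i - 1) ⊓ S⁆ ⊔ C i) ⊔ C i := sup_le_sup_right hB1 _
          _ = ⁅P i, P (i - 1) ⊓ S⁆ ⊔ C i := by rw [sup_assoc, sup_idem]
          _ ≤ (⁅P i ⊓ S, P (i - 1) ⊓ S⁆ ⊔ C i) ⊔ C i := sup_le_sup_right hB2 _
          _ = ⁅P i ⊓ S, P (i - 1) ⊓ S⁆ ⊔ C i := by rw [sup_assoc, sup_idem]
      -- commutator subgroup bounds
      have hAPS : ∀ i, k + 2 ≤ i → i ≤ n →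
          ⁅P i ⊓ S, P (i - 1) ⊓ S⁆ ≤ P i ⊓ S := by
        intro i hi hin
        rw [Subgroup.commutator_le]
        intro s hs t ht
        constructor
        · have h1 : t * s⁻¹ * t⁻¹ ∈ P i :=
            hnorm (i - 1) i (by omega) (by omega) hin t ht.1 s⁻¹ ((P i).inv_mem hs.1)
          have heq : ⁅s, t⁆ = s * (t * s⁻¹ * t⁻¹) := by
            simp only [commutatorElement_def]; group
          rw [heq]; exact (P i).mul_mem hs.1 h1
        · simp only [commutatorElement_def]
          exact S.mul_mem (S.mul_mem (S.mul_mem hs.2 ht.2) (S.inv_mem hs.2)) (S.inv_mem ht.2)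
      -- Step B3 : Dedekind
      have stepB3 : ∀ i, k + 2 ≤ i → i ≤ n →
          P i ⊓ S ≤ ⁅P i ⊓ S, P (i - 1) ⊓ S⁆ ⊔ (C i ⊓ S) := by
        intro i hi hin
        intro x hx
        have hx1 : x ∈ ⁅P i ⊓ S, P (i - 1) ⊓ S⁆ ⊔ C i := stepB i hi hin hx.1
        have hcoe : (↑(⁅P i ⊓ S, P (i - 1) ⊓ S⁆ ⊔ C i) : Set G)
            = ((⁅P i ⊓ S, P (i - 1) ⊓ S⁆ : Subgroup G) : Set G) * (C i : Set G) :=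
          coe_sup_of_norm_right _ _ (fun a ha c hc =>
            hCconj' i i (by omega) le_rfl hin a ((hAPS i hi hin ha).1) c hc)
        rw [← SetLike.mem_coe, hcoe] at hx1
        obtain ⟨a, ha, c, hc, rfl⟩ := hx1
        have hcS : c ∈ S := by
          have h2 : a⁻¹ * (a * c) ∈ S := S.mul_mem (S.inv_mem (hAPS i hi hin ha).2) hx.2
          simpa using h2
        exact Subgroup.mul_mem _ (Subgroup.mem_sup_left ha) (Subgroup.mem_sup_right ⟨hc, hcS⟩)
      -- inner induction
      have inner : ∀ i, k + 2 ≤ i → i ≤ n → P i ⊓ S ≤ S' ⊔ (C i ⊓ S) := by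
        intro i hi
        induction i, hi using Nat.le_induction with
        | base =>
          intro hin
          have hA : ⁅P (k + 2) ⊓ S, P (k + 1) ⊓ S⁆ ≤ S' := by
            haveI : Finite ↥S := inferInstance
            have hnil : Group.IsNilpotent (↥S ⧸ resid ↥S) := nilpotent_quotient_resid ↥S
            set A' := (P (k + 2) ⊓ S).subgroupOf S with hA'd
            set B' := (P (k + 1) ⊓ S).subgroupOf S with hB'd
            have hA' : IsPGroup (p (k + 2)) A' :=
              ((hp (k + 2) (by omega) hk2n).2.to_le inf_le_left).comap_subtype
            have hB' : IsPGroup (p (k + 1)) B' :=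
              ((hp (k + 1) (by omega) (by omega)).2.to_le inf_le_left).comap_subtype
            have hcomm : Subgroup.map (QuotientGroup.mk' (resid ↥S)) ⁅A', B'⁆ = ⊥ := by
              rw [Subgroup.map_commutator]
              exact commutator_eq_bot_of_nilpotent hnil
                (hp (k + 2) (by omega) hk2n).1 (hp (k + 1) (by omega) (by omega)).1
                (hpp (k + 1) (by omega) hk2n) _ _ (hA'.map _) (hB'.map _)
            rw [Subgroup.map_eq_bot_iff, QuotientGroup.ker_mk'] at hcomm
            have hmap := Subgroup.map_mono (f := S.subtype) hcomm
            rw [Subgroup.map_commutator, Subgroup.subgroupOf_map_subtype,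
              Subgroup.subgroupOf_map_subtype, map_subtype_resid] at hmap
            rw [hS'def]
            refine le_trans ?_ hmap
            rw [inf_assoc, inf_idem, inf_assoc, inf_idem]
          refine le_trans (stepB3 (k + 2) le_rfl hin) ?_
          rw [show k + 2 - 1 = k + 1 by omega]
          exact sup_le (le_trans hA le_sup_left) le_sup_right
        | succ i hi ihi =>
          intro hin
          have ihi' := ihi (by omega)
          have hA : ⁅P (i + 1) ⊓ S, P i ⊓ S⁆ ≤ S' ⊔ (C (i + 1) ⊓ S) := by
            rw [Subgroup.commutator_le]
            intro x hx q hq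
            have hq' : q ∈ S' ⊔ (C i ⊓ S) := ihi' hq
            rw [← SetLike.mem_coe, Subgroup.normal_mul] at hq'
            obtain ⟨s', hs', d, hd, rfl⟩ := hq'
            have heq : ⁅x, s' * d⁆
                = ⁅x, s'⁆ * (s' * (x * d * x⁻¹ * d⁻¹) * s'⁻¹) := by
              simp only [commutatorElement_def]; group
            rw [heq]
            have h1 : ⁅x, s'⁆ ∈ S' := by
              have hconj : x * s' * x⁻¹ ∈ S' := hS'normal.conj_mem s' hs' x
              have heq2 : ⁅x, s'⁆ = (x * s' * x⁻¹) * s'⁻¹ := by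
                simp only [commutatorElement_def, mul_assoc]
              rw [heq2]; exact S'.mul_mem hconj (S'.inv_mem hs')
            have h2 : x * d * x⁻¹ * d⁻¹ ∈ C (i + 1) ⊓ S := by
              constructor
              · have := hcomC (i + 1) (by omega) hin x hx.1 d
                  (by rw [show i + 1 - 1 = i by omega]; exact hd.1)
                exact this
              · exact S.mul_mem (S.mul_mem (S.mul_mem hx.2 hd.2) (S.inv_mem hx.2))
                  (S.inv_mem hd.2)
            have h3 : s' * (x * d * x⁻¹ * d⁻¹) * s'⁻¹ ∈ S' ⊔ (C (i + 1) ⊓ S) := by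
              have heq3 : s' * (x * d * x⁻¹ * d⁻¹) * s'⁻¹
                  = (s' * (x * d * x⁻¹ * d⁻¹) * s'⁻¹ * (x * d * x⁻¹ * d⁻¹)⁻¹)
                    * (x * d * x⁻¹ * d⁻¹) := by group
              rw [heq3]
              have h4 : s' * (x * d * x⁻¹ * d⁻¹) * s'⁻¹ * (x * d * x⁻¹ * d⁻¹)⁻¹ ∈ S' := by
                have h5 : (x * d * x⁻¹ * d⁻¹) * s'⁻¹ * (x * d * x⁻¹ * d⁻¹)⁻¹ ∈ S' :=
                  hS'normal.conj_mem s'⁻¹ (S'.inv_mem hs') _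
                have heq4 : s' * (x * d * x⁻¹ * d⁻¹) * s'⁻¹ * (x * d * x⁻¹ * d⁻¹)⁻¹
                    = s' * ((x * d * x⁻¹ * d⁻¹) * s'⁻¹ * (x * d * x⁻¹ * d⁻¹)⁻¹) := by group
                rw [heq4]; exact S'.mul_mem hs' h5
              exact Subgroup.mul_mem _ (Subgroup.mem_sup_left h4) (Subgroup.mem_sup_right h2)
            exact Subgroup.mul_mem _ (Subgroup.mem_sup_left h1) h3
          refine le_trans (stepB3 (i + 1) (by omega) hin) ?_
          rw [show i + 1 - 1 = i by omega]
          exact sup_le hA le_sup_right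
      -- conclude outer step
      intro x hx
      obtain ⟨t, htPS, c, hc, rfl⟩ := stepA i0 (by omega) hi0n x hx
      have ht' : t ∈ S' ⊔ (C i0 ⊓ S) := inner i0 hi0 hi0n htPS
      have ht'' : t ∈ S' ⊔ C i0 := by
        refine (sup_le_sup_left inf_le_left S' : S' ⊔ (C i0 ⊓ S) ≤ S' ⊔ C i0) ht'
      exact Subgroup.mul_mem _ ht'' (Subgroup.mem_sup_right hc)
  have hfinal := main (n - 1) le_rfl n (by omega) le_rfl
  rw [hCn, sup_bot_eq] at hfinal
  exact hfinal

end TowerAux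

namespace TowerAux

variable {G : Type*} [Group G]

/-- the join `P n ⊔ P (n-1) ⊔ ⋯ ⊔ P (n-k+1)` -/
def prodSub (P : ℕ → Subgroup G) (n : ℕ) : ℕ → Subgroup G
  | 0 => ⊥
  | k + 1 => prodSub P n k ⊔ P (n - k)

lemma prodSub_conj (P : ℕ → Subgroup G) (n k : ℕ) (g : G)
    (hg : ∀ m, m < k → ∀ y ∈ P (n - m), g * y * g⁻¹ ∈ P (n - m)) :
    ∀ a ∈ prodSub P n k, g * a * g⁻¹ ∈ prodSub P n k := by
  induction k with
  | zero =>
    intro a ha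
    rw [show (prodSub P n 0) = ⊥ from rfl] at ha ⊢
    simp only [Subgroup.mem_bot] at ha ⊢
    simp [ha]
  | succ k ih =>
    intro a ha
    rw [show prodSub P n (k+1) = prodSub P n k ⊔ P (n - k) from rfl] at ha ⊢
    have hmap : Subgroup.map (MulAut.conj g).toMonoidHom (prodSub P n k ⊔ P (n - k))
        ≤ prodSub P n k ⊔ P (n - k) := by
      rw [Subgroup.map_sup]
      refine sup_le (le_trans ?_ le_sup_left) (le_trans ?_ le_sup_right)
      · rw [Subgroup.map_le_iff_le_comap]
        intro y hy
        exact ih (fun m hm => hg m (by omega)) y hy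
      · rw [Subgroup.map_le_iff_le_comap]
        intro y hy
        exact hg k (by omega) y hy
    have := hmap ⟨a, ha, rfl⟩
    simpa using this

open scoped Pointwise in
lemma coe_prodSub (P : ℕ → Subgroup G) (n : ℕ)
    (hnorm : ∀ i j, 1 ≤ i → i < j → j ≤ n → ∀ x ∈ P i, ∀ y ∈ P j, x * y * x⁻¹ ∈ P j) :
    ∀ k, k ≤ n → (prodSub P n k : Set G) = mulFrom P n k := by
  intro k
  induction k with
  | zero =>
    intro _
    show ((⊥ : Subgroup G) : Set G) = (1 : Set G)
    ext x
    simp [Set.mem_one]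
  | succ k ih =>
    intro hk
    have ihk := ih (by omega)
    show ((prodSub P n k ⊔ P (n - k) : Subgroup G) : Set G) = mulFrom P n k * (P (n - k) : Set G)
    rw [← ihk]
    apply coe_sup_of_norm_left
    intro c hc a ha
    refine prodSub_conj P n k c ?_ a ha
    intro m hm y hy
    exact hnorm (n - k) (n - m) (by omega) (by omega) (by omega) c hc y hy

lemma tower_shift (n : ℕ) (P : ℕ → Subgroup G) (hT : IsTower (n + 1) P) :
    IsTower n (fun i => P (i + 1)) := by
  obtain ⟨hP1, ⟨p, hp, hpp⟩, hnorm, ⟨C, hCn, hCdef, hCcomm⟩⟩ := hT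
  refine ⟨?_, ⟨fun i => p (i + 1), ?_, ?_⟩, ?_, ⟨fun i => C (i + 1), ?_, ?_, ?_⟩⟩
  · intro i h1 h2; exact hP1 (i + 1) (by omega) (by omega)
  · intro i h1 h2; exact hp (i + 1) (by omega) (by omega)
  · intro i h1 h2; exact hpp (i + 1) (by omega) (by omega)
  · intro i j h1 h2 h3; exact hnorm (i + 1) (j + 1) (by omega) (by omega) (by omega)
  · exact hCn
  · intro i h1 h2; exact hCdef (i + 1) (by omega) (by omega)
  · intro i h1 h2
    have h := hCcomm (i + 1) (by omega) (by omega)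
    rw [show i + 1 - 1 = i from rfl] at h
    show ⁅P (i + 1), P (i - 1 + 1)⁆ ⊔ C (i + 1) = P (i + 1)
    rw [show i - 1 + 1 = i by omega]
    exact h

lemma mulFrom_shift (n : ℕ) (P : ℕ → Subgroup G) :
    ∀ k, k ≤ n → mulFrom (fun i => P (i + 1)) n k = mulFrom P (n + 1) k := by
  intro k
  induction k with
  | zero => intro _; rfl
  | succ k ih =>
    intro hk
    show mulFrom (fun i => P (i + 1)) n k * ((P (n - k + 1) : Subgroup G) : Set G)
        = mulFrom P (n + 1) k * ((P (n + 1 - k) : Subgroup G) : Set G)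
    rw [ih (by omega), show n - k + 1 = n + 1 - k by omega]

lemma tower_upper [Finite G] :
    ∀ n, 1 ≤ n → ∀ (P : ℕ → Subgroup G) (K : Subgroup G),
      IsTower n P → (K : Set G) = mulFrom P n n → rhoS K (n - 1) ≤ P n := by
  intro n
  induction n with
  | zero => intro h; omega
  | succ n ih =>
    intro _ P K hT hK
    have hTc := hT
    obtain ⟨hP1, ⟨p, hp, hpp⟩, hnorm, ⟨C, hCn, hCdef, hCcomm⟩⟩ := hTc
    rcases Nat.eq_zero_or_pos n with rfl | hn
    · show rhoS K 0 ≤ P 1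
      have hKeq : (K : Set G) = (P 1 : Set G) := by
        rw [hK]
        show (1 : Set G) * ((P (1 - 0) : Subgroup G) : Set G) = _
        rw [one_mul]
      intro x hx
      have : x ∈ (P 1 : Set G) := hKeq ▸ hx
      exact this
    · set H := prodSub P (n + 1) n with hH
      have hHcoe : (H : Set G) = mulFrom P (n + 1) n :=
        coe_prodSub P (n + 1) hnorm n (by omega)
      have hKprod : (K : Set G) = (H : Set G) * ((P 1 : Subgroup G) : Set G) := by
        rw [hK]
        show mulFrom P (n + 1) n * ((P (n + 1 - n) : Subgroup G) : Set G) = _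
        rw [show n + 1 - n = 1 by omega, hHcoe]
      have hHK : H ≤ K := by
        intro h hh
        rw [← SetLike.mem_coe, hKprod]
        exact ⟨h, hh, 1, (P 1).one_mem, mul_one h⟩
      have hconjP1 : ∀ b ∈ P 1, ∀ h' ∈ H, b * h' * b⁻¹ ∈ H := by
        intro b hb h' hh'
        exact prodSub_conj P (n + 1) n b
          (fun m hm y hy => hnorm 1 (n + 1 - m) le_rfl (by omega) (by omega) b hb y hy) h' hh'
      have hnormH : ∀ x ∈ K, ∀ h ∈ H, x * h * x⁻¹ ∈ H := by
        intro x hx h hh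
        rw [← SetLike.mem_coe, hKprod] at hx
        obtain ⟨a, ha, b, hb, rfl⟩ := hx
        have haH : a ∈ H := ha
        have heq : a * b * h * (a * b)⁻¹ = a * (b * h * b⁻¹) * a⁻¹ := by group
        rw [heq]
        exact H.mul_mem (H.mul_mem haH (hconjP1 b hb h hh)) (H.inv_mem haH)
      have hres : resS K ≤ H := by
        set N : Subgroup ↥K := H.subgroupOf K with hN
        haveI hNnorm : N.Normal := by
          constructor
          intro x hxN g
          rw [Subgroup.mem_subgroupOf] at hxN ⊢
          exact hnormH (↑g) g.2 (↑x) hxN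
        haveI : Fact (p 1).Prime := ⟨(hp 1 le_rfl (by omega)).1⟩
        have hQp : IsPGroup (p 1) (↥K ⧸ N) := by
          intro q
          obtain ⟨x, rfl⟩ := QuotientGroup.mk'_surjective N q
          have hxK : (x : G) ∈ (H : Set G) * ((P 1 : Subgroup G) : Set G) := by
            rw [← hKprod]; exact x.2
          obtain ⟨h, hh, b, hb, hxe⟩ := hxK
          have hbK : b ∈ K := by
            have hbe : b = h⁻¹ * ↑x := by rw [← hxe]; group
            rw [hbe]; exact K.mul_mem (K.inv_mem (hHK hh)) x.2
          obtain ⟨m, hm⟩ := (hp 1 le_rfl (by omega)).2 ⟨b, hb⟩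
          refine ⟨m, ?_⟩
          have hmk : (QuotientGroup.mk' N) x = (QuotientGroup.mk' N) ⟨b, hbK⟩ := by
            rw [QuotientGroup.mk'_eq_mk']
            refine ⟨x⁻¹ * ⟨b, hbK⟩, ?_, by group⟩
            rw [Subgroup.mem_subgroupOf]
            show ((x : G))⁻¹ * b ∈ H
            have hxinv : ((x : G))⁻¹ = b⁻¹ * h⁻¹ := by rw [← hxe]; group
            rw [hxinv]
            have heq2 : b⁻¹ * h⁻¹ * b = b⁻¹ * h⁻¹ * (b⁻¹)⁻¹ := by group
            rw [heq2]
            exact hconjP1 b⁻¹ ((P 1).inv_mem hb) h⁻¹ (H.inv_mem hh)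
          have hbpow : (⟨b, hbK⟩ : ↥K) ^ (p 1) ^ m = 1 := by
            have hbG : b ^ (p 1) ^ m = 1 := by
              have := congrArg (Subgroup.subtype (P 1)) hm
              simpa using this
            ext
            simp [hbG]
          rw [hmk, ← map_pow, hbpow, map_one]
        have hnilQ : Group.IsNilpotent (↥K ⧸ N) := hQp.isNilpotent
        have hresid : resid ↥K ≤ N := resid_le_of_quotient_nilpotent N hnilQ
        have hmap := Subgroup.map_mono (f := K.subtype) hresid
        rw [map_subtype_resid, Subgroup.subgroupOf_map_subtype] at hmap
        exact hmap.trans inf_le_left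
      have hT' : IsTower n (fun i => P (i + 1)) := tower_shift n P hT
      have hHmul : (H : Set G) = mulFrom (fun i => P (i + 1)) n n := by
        rw [hHcoe, mulFrom_shift n P n le_rfl]
      have hHle : rhoS H (n - 1) ≤ P (n + 1) := by
        have := ih hn (fun i => P (i + 1)) H hT' hHmul
        simpa [show n - 1 + 1 = n by omega] using this
      have hstep : rhoS K n = rhoS (resS K) (n - 1) := by
        rw [show n = (n - 1) + 1 by omega, rhoS_succ_eq]
        rw [show n - 1 + 1 - 1 = n - 1 by omega]
      show rhoS K (n + 1 - 1) ≤ P (n + 1)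
      rw [show n + 1 - 1 = n from rfl, hstep]
      exact le_trans (rhoS_mono hres (n - 1)) hHle

end TowerAux

lemma rho_eq_rhoS (G : Type*) [Group G] (k : ℕ) : rho G k = TowerAux.rhoS ⊤ k := by
  induction k with
  | zero => rfl
  | succ k ih =>
    show Subgroup.map (rho G k).subtype (⨅ i : ℕ, (⊤ : Subgroup (rho G k)).lowerCentralSeries i)
        = TowerAux.rhoS ⊤ (k + 1)
    rw [TowerAux.map_subtype_resS, ih]
    rfl

end AuxiliaryLemmas

open scoped Pointwise in
/-- **Lemma 3**. If `{P n, …, P 1}` is a tower in a finite solvable group `G` and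
`G = P n ⋯ P 1`, then `ρ_{n-1}(G) = P n`. -/
theorem rho_eq_top_subgroup_of_tower
    (G : Type*) [Group G] [Finite G] [Group.IsSolvable G]
    (n : ℕ) (hn : 1 ≤ n) (P : ℕ → Subgroup G)
    (hT : IsTower n P) (hprod : mulFrom P n n = Set.univ) :
    rho G (n - 1) = P n := by
  have hup := TowerAux.tower_upper n hn P ⊤ hT (by rw [Subgroup.coe_top, hprod])
  have hlow := TowerAux.tower_lower n hn P hT
  rw [rho_eq_rhoS G (n - 1)]
  exact le_antisymm hup hlow
end

section
/- Let the finite solvable group G be the product of the subgroups of a tower T = {P_n,…,P_1}, i.e. G = P_n⋯P_1. Then for every prime p, the p-length ℓ_p(G) of G equals m_p(T), the number of indices i in {1,…,n} for which P_i is a p-group. -/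
open Pointwise

lemma aux_mem_of_coprime {G : Type*} [Group G] (H : Subgroup G) {z : G} {a m : ℕ}
    (h1 : z ^ a = 1) (hm : z ^ m ∈ H) (hc : Nat.Coprime m a) : z ∈ H := by
  have key : (1 : ℤ) = (m : ℤ) * Nat.gcdA m a + (a : ℤ) * Nat.gcdB m a := by
    have h := Nat.gcd_eq_gcd_ab m a
    rw [hc] at h
    exact_mod_cast h
  have hz : z = (z ^ (m : ℤ)) ^ Nat.gcdA m a * (z ^ (a : ℤ)) ^ Nat.gcdB m a := by
    rw [← zpow_mul, ← zpow_mul, ← zpow_add, ← key, zpow_one]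
  rw [zpow_natCast, zpow_natCast, h1, one_zpow, mul_one] at hz
  rw [hz]
  exact Subgroup.zpow_mem H hm _

open scoped commutatorElement in
open Classical in
lemma tower_lower {G : Type*} [Group G] (n : ℕ) (P : ℕ → Subgroup G)
    (hnt : ∀ i, 1 ≤ i → i ≤ n → P i ≠ ⊥)
    (q : ℕ → ℕ)
    (hq : ∀ i, 1 ≤ i → i ≤ n → (q i).Prime ∧ IsPGroup (q i) (P i))
    (hqne : ∀ i, 1 ≤ i → i + 1 ≤ n → q (i + 1) ≠ q i)
    (C : ℕ → Subgroup G) (hCn : C n = ⊥)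
    (hCdef : ∀ i, 1 ≤ i → i < n →
      (C i : Set G) = {x | x ∈ P i ∧ ∀ y ∈ P (i + 1), x * y * x⁻¹ * y⁻¹ ∈ C (i + 1)})
    (hComm : ∀ i, 2 ≤ i → i ≤ n → ⁅P i, P (i - 1)⁆ ⊔ C i = P i)
    (p : ℕ) (hp : p.Prime)
    (k : ℕ) (N : ℕ → Subgroup G) (hN0 : N 0 = ⊥) (hNk : N k = ⊤)
    (hmono : ∀ i, i < k → N i ≤ N (i + 1)) (hnrm : ∀ i, (N i).Normal)
    (hstep : ∀ i, i < k →
      (∀ x ∈ N (i + 1), ∃ m : ℕ, x ^ p ^ m ∈ N i) ∨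
      (∀ x ∈ N (i + 1), ∃ m : ℕ, 0 < m ∧ m.Coprime p ∧ x ^ m ∈ N i)) :
    ((Finset.Icc 1 n).filter fun i => IsPGroup p (P i)).card ≤
      ((Finset.range k).filter fun i =>
        (∀ x ∈ N (i + 1), ∃ m : ℕ, x ^ p ^ m ∈ N i) ∧ N i ≠ N (i + 1)).card := by
  classical
  have hmono' : ∀ s t, s ≤ t → t ≤ k → N s ≤ N t := by
    intro s t hst htk
    induction t with
    | zero => have : s = 0 := by omega
              subst this; exact le_rfl
    | succ t ih =>
      rcases Nat.lt_or_ge s (t + 1) with h | h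
      · exact le_trans (ih (by omega) (by omega)) (hmono t (by omega))
      · have : s = t + 1 := by omega
        subst this; exact le_rfl
  have hCle : ∀ i, 1 ≤ i → i ≤ n → C i ≤ P i := by
    intro i h1 h2
    rcases eq_or_lt_of_le h2 with rfl | hlt
    · rw [hCn]; exact bot_le
    · intro x hx
      have hx' : x ∈ (C i : Set G) := hx
      rw [hCdef i h1 hlt] at hx'
      exact hx'.1
  have hpow : ∀ i, 1 ≤ i → i ≤ n → ∀ z ∈ P i, ∃ a : ℕ, z ^ (q i) ^ a = 1 := by
    intro i h1 h2 z hz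
    obtain ⟨a, ha⟩ := (hq i h1 h2).2 ⟨z, hz⟩
    exact ⟨a, by simpa using congrArg Subtype.val ha⟩
  have hCne : ∀ i, 1 ≤ i → i ≤ n → C i ≠ P i := by
    have key : ∀ d i, 1 ≤ i → i + d = n → C i = P i → False := by
      intro d
      induction d with
      | zero =>
        intro i h1 hin hCP
        have : i = n := by omega
        subst this
        exact hnt i h1 le_rfl (by rw [← hCP, hCn])
      | succ d ih =>
        intro i h1 hin hCP
        have hlt : i < n := by omega
        have hsub : ⁅P (i + 1), P i⁆ ≤ C (i + 1) := by
          rw [Subgroup.commutator_le]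
          intro g1 hg1 g2 hg2
          have hg2' : g2 ∈ (C i : Set G) := by rw [hCP]; exact hg2
          rw [hCdef i h1 hlt] at hg2'
          have h3 := hg2'.2 g1 hg1
          have he : ⁅g1, g2⁆ = (g2 * g1 * g2⁻¹ * g1⁻¹)⁻¹ := by
            rw [commutatorElement_def]; group
          rw [he]
          exact inv_mem h3
        have h2 : ⁅P (i + 1), P (i + 1 - 1)⁆ ⊔ C (i + 1) = P (i + 1) :=
          hComm (i + 1) (by omega) (by omega)
        simp only [Nat.add_sub_cancel] at h2
        have hEq : C (i + 1) = P (i + 1) := by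
          refine le_antisymm (hCle (i + 1) (by omega) (by omega)) ?_
          rw [← h2]
          exact sup_le hsub le_rfl
        exact ih (i + 1) (by omega) (by omega) hEq
    intro i h1 h2 hCP
    exact key (n - i) i h1 (by omega) hCP
  have hdecomp : ∀ (A B : Subgroup G) (x : G), B.Normal → x ∈ A ⊔ B →
      ∃ c ∈ A, ∃ z ∈ B, x = c * z := by
    intro A B x hB hx
    haveI := hB
    have hx' : x ∈ (↑(A ⊔ B) : Set G) := hx
    rw [Subgroup.mul_normal A B] at hx'
    obtain ⟨c, hc, z, hz, hcz⟩ := hx'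
    exact ⟨c, hc, z, hz, hcz.symm⟩
  set T : ℕ → ℕ := fun i => sInf {t | P i ≤ C i ⊔ N t} with hTdef
  have Tmem : ∀ i, P i ≤ C i ⊔ N (T i) := by
    intro i
    exact Nat.sInf_mem (⟨k, by simp [Set.mem_setOf_eq, hNk]⟩ : {t | P i ≤ C i ⊔ N t}.Nonempty)
  have Tle : ∀ i, T i ≤ k := fun i => Nat.sInf_le (by simp [Set.mem_setOf_eq, hNk])
  have Tpos : ∀ i, 1 ≤ i → i ≤ n → 1 ≤ T i := by
    intro i h1 h2
    by_contra h
    have h0 : T i = 0 := by omega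
    have hm := Tmem i
    rw [h0, hN0, sup_bot_eq] at hm
    exact hCne i h1 h2 (le_antisymm (hCle i h1 h2) hm)
  have Tmin : ∀ i, 1 ≤ i → i ≤ n → ¬ P i ≤ C i ⊔ N (T i - 1) := by
    intro i h1 h2 hle
    have h3 : T i ≤ T i - 1 := Nat.sInf_le hle
    have := Tpos i h1 h2
    omega
  have hwit : ∀ i, 1 ≤ i → i ≤ n → ∃ z, z ∈ P i ∧ z ∈ N (T i) ∧ z ∉ N (T i - 1) := by
    intro i h1 h2
    obtain ⟨y, hyP, hyn⟩ := SetLike.not_le_iff_exists.1 (Tmin i h1 h2)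
    obtain ⟨c, hc, z, hz, rfl⟩ := hdecomp _ _ y (hnrm _) (Tmem i hyP)
    refine ⟨z, ?_, hz, ?_⟩
    · have h3 : c⁻¹ * (c * z) ∈ P i := mul_mem (inv_mem (hCle i h1 h2 hc)) hyP
      simpa using h3
    · intro hzN
      exact hyn (mul_mem (Subgroup.mem_sup_left hc) (Subgroup.mem_sup_right hzN))
  have hstepA : ∀ i, 1 ≤ i → i ≤ n → N (T i - 1) ≠ N (T i) := by
    intro i h1 h2
    obtain ⟨z, _, hz2, hz3⟩ := hwit i h1 h2
    intro he
    rw [← he] at hz2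
    exact hz3 hz2
  have hstepB : ∀ i, 1 ≤ i → i ≤ n → q i = p →
      ∀ x ∈ N (T i), ∃ m : ℕ, x ^ p ^ m ∈ N (T i - 1) := by
    intro i h1 h2 hqi
    obtain ⟨z, hz1, hz2, hz3⟩ := hwit i h1 h2
    have hlt : T i - 1 < k := by
      have := Tle i; have := Tpos i h1 h2; omega
    have hsub : T i - 1 + 1 = T i := by have := Tpos i h1 h2; omega
    rcases hstep (T i - 1) hlt with h | h
    · rwa [hsub] at h
    · exfalso
      rw [hsub] at h
      obtain ⟨m, hm0, hmc, hzm⟩ := h z hz2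
      obtain ⟨a, ha⟩ := hpow i h1 h2 z hz1
      rw [hqi] at ha
      exact hz3 (aux_mem_of_coprime _ ha hzm (hmc.pow_right a))
  have Tmono : ∀ i, 1 ≤ i → i + 1 ≤ n → T (i + 1) ≤ T i := by
    intro i h1 h2
    by_contra hcon
    push_neg at hcon
    have htpos : 1 ≤ T (i + 1) := Tpos (i + 1) (by omega) h2
    have hPi : P i ≤ C i ⊔ N (T (i + 1) - 1) := by
      refine le_trans (Tmem i) (sup_le_sup_left (hmono' (T i) (T (i + 1) - 1) (by omega)
        (by have := Tle (i + 1); omega)) _)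
    have hcomm' : ⁅P (i + 1), P i⁆ ⊔ C (i + 1) = P (i + 1) := by
      have h3 := hComm (i + 1) (by omega) h2
      simpa using h3
    have hPsub : P (i + 1) ≤ C (i + 1) ⊔ N (T (i + 1) - 1) := by
      rw [← hcomm']
      refine sup_le ?_ le_sup_left
      rw [Subgroup.commutator_le]
      intro g1 hg1 g2 hg2
      obtain ⟨c, hc, z, hz, rfl⟩ := hdecomp _ _ g2 (hnrm _) (hPi hg2)
      have hcC : ⁅g1, c⁆ ∈ C (i + 1) := by
        have hc' : c ∈ (C i : Set G) := hc
        rw [hCdef i h1 (by omega)] at hc'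
        have h4 := hc'.2 g1 hg1
        have he : ⁅g1, c⁆ = (c * g1 * c⁻¹ * g1⁻¹)⁻¹ := by
          rw [commutatorElement_def]; group
        rw [he]
        exact inv_mem h4
      have hzN : c * ⁅g1, z⁆ * c⁻¹ ∈ N (T (i + 1) - 1) := by
        have h5 : ⁅g1, z⁆ ∈ N (T (i + 1) - 1) := by
          rw [commutatorElement_def]
          exact mul_mem ((hnrm _).conj_mem z hz g1) (inv_mem hz)
        exact (hnrm _).conj_mem _ h5 c
      have he2 : ⁅g1, c * z⁆ = ⁅g1, c⁆ * (c * ⁅g1, z⁆ * c⁻¹) := by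
        simp only [commutatorElement_def]; group
      rw [he2]
      exact mul_mem (Subgroup.mem_sup_left hcC) (Subgroup.mem_sup_right hzN)
    exact Tmin (i + 1) (by omega) h2 hPsub
  have Tstrict : ∀ i, 1 ≤ i → i + 1 ≤ n → q (i + 1) = p → T (i + 1) < T i := by
    intro i h1 h2 hqp
    rcases lt_or_eq_of_le (Tmono i h1 h2) with h | h
    · exact h
    · exfalso
      have htpos : 1 ≤ T (i + 1) := Tpos (i + 1) (by omega) h2
      have hPi : P i ≤ C i ⊔ N (T (i + 1) - 1) := by
        intro x hx
        have hx2 : x ∈ C i ⊔ N (T (i + 1)) := by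
          rw [h]; exact Tmem i hx
        obtain ⟨c, hc, z, hz, rfl⟩ := hdecomp _ _ x (hnrm _) hx2
        obtain ⟨m, hm⟩ := hstepB (i + 1) (by omega) h2 hqp z hz
        have hzP : z ∈ P i := by
          have h5 : c⁻¹ * (c * z) ∈ P i := mul_mem (inv_mem (hCle i h1 (by omega) hc)) hx
          simpa using h5
        obtain ⟨a, ha⟩ := hpow i h1 (by omega) z hzP
        have hqiq : p ≠ q i := by
          rw [← hqp]; exact hqne i h1 h2
        have hc2 : Nat.Coprime (p ^ m) (q i ^ a) :=
          Nat.Coprime.pow _ _ ((Nat.coprime_primes hp (hq i h1 (by omega)).1).2 hqiq)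
        have hzN : z ∈ N (T (i + 1) - 1) := aux_mem_of_coprime _ ha hm hc2
        exact mul_mem (Subgroup.mem_sup_left hc) (Subgroup.mem_sup_right hzN)
      have h6 : T i ≤ T (i + 1) - 1 := Nat.sInf_le hPi
      omega
  have Tchain : ∀ i j, 1 ≤ i → i ≤ j → j ≤ n → T j ≤ T i := by
    intro i j h1 hij hj
    induction j with
    | zero => omega
    | succ j ih =>
      rcases Nat.eq_or_lt_of_le hij with rfl | hlt
      · exact le_rfl
      · exact le_trans (Tmono j (by omega) hj) (ih (by omega) (by omega))
  have Tlt : ∀ i j, 1 ≤ i → i < j → j ≤ n → q j = p → T j < T i := by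
    intro i j h1 hij hj hqj
    have h3 : T j < T (j - 1) := by
      have h4 := Tstrict (j - 1) (by omega) (by omega)
        (by rwa [Nat.sub_add_cancel (by omega : 1 ≤ j)])
      rwa [Nat.sub_add_cancel (by omega : 1 ≤ j)] at h4
    exact lt_of_lt_of_le h3 (Tchain i (j - 1) h1 (by omega) (by omega))
  have hqp : ∀ i, 1 ≤ i → i ≤ n → IsPGroup p (P i) → q i = p := by
    intro i h1 h2 hPp
    by_contra hne
    rcases Subgroup.bot_or_exists_ne_one (P i) with hb | ⟨g, hgP, hg1⟩
    · exact hnt i h1 h2 hb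
    · obtain ⟨a, ha⟩ := hpow i h1 h2 g hgP
      obtain ⟨b, hb⟩ := hPp ⟨g, hgP⟩
      have hb' : g ^ p ^ b = 1 := by simpa using congrArg Subtype.val hb
      have hcop : Nat.Coprime (p ^ b) (q i ^ a) :=
        Nat.Coprime.pow _ _ ((Nat.coprime_primes hp (hq i h1 h2).1).2 (Ne.symm hne))
      have : g ∈ (⊥ : Subgroup G) :=
        aux_mem_of_coprime ⊥ ha (by simp [Subgroup.mem_bot, hb']) hcop
      exact hg1 (Subgroup.mem_bot.1 this)
  refine Finset.card_le_card_of_injOn (fun i => T i - 1) ?_ ?_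
  · intro i hi
    simp only [Finset.coe_filter, Set.mem_setOf_eq, Finset.mem_Icc] at hi
    obtain ⟨⟨h1, h2⟩, hPp⟩ := hi
    have hqi : q i = p := hqp i h1 h2 hPp
    have h1T := Tpos i h1 h2
    have h2T := Tle i
    simp only [Finset.coe_filter, Set.mem_setOf_eq, Finset.mem_range]
    refine ⟨by omega, ?_, ?_⟩
    · rw [Nat.sub_add_cancel h1T]
      exact hstepB i h1 h2 hqi
    · rw [Nat.sub_add_cancel h1T]
      exact hstepA i h1 h2
  · intro i hi j hj hij
    simp only [Finset.coe_filter, Set.mem_setOf_eq, Finset.mem_Icc] at hi hj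
    obtain ⟨⟨hi1, hi2⟩, hiP⟩ := hi
    obtain ⟨⟨hj1, hj2⟩, hjP⟩ := hj
    have hqi := hqp i hi1 hi2 hiP
    have hqj := hqp j hj1 hj2 hjP
    by_contra hne
    have hTi := Tpos i hi1 hi2
    have hTj := Tpos j hj1 hj2
    rcases lt_trichotomy i j with h | h | h
    · have := Tlt i j hi1 h hj2 hqj
      simp only at hij
      omega
    · exact hne h
    · have := Tlt j i hj1 h hi2 hqi
      simp only at hij
      omega

open Classical in
lemma tower_upper {G : Type*} [Group G] (n : ℕ) (hn : 1 ≤ n) (P : ℕ → Subgroup G)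
    (q : ℕ → ℕ)
    (hq : ∀ i, 1 ≤ i → i ≤ n → (q i).Prime ∧ IsPGroup (q i) (P i))
    (hnorm : ∀ i j, 1 ≤ i → i < j → j ≤ n → ∀ x ∈ P i, ∀ y ∈ P j, x * y * x⁻¹ ∈ P j)
    (hprod : mulFrom P n n = Set.univ)
    (p : ℕ) (hp : p.Prime) :
    ∃ N : ℕ → Subgroup G, N 0 = ⊥ ∧ N n = ⊤ ∧ (∀ i, i < n → N i ≤ N (i + 1)) ∧
      (∀ i, (N i).Normal) ∧
      (∀ i, i < n → (∀ x ∈ N (i + 1), ∃ m : ℕ, x ^ p ^ m ∈ N i) ∨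
        (∀ x ∈ N (i + 1), ∃ m : ℕ, 0 < m ∧ m.Coprime p ∧ x ^ m ∈ N i)) ∧
      ((Finset.range n).filter fun i =>
        (∀ x ∈ N (i + 1), ∃ m : ℕ, x ^ p ^ m ∈ N i) ∧ N i ≠ N (i + 1)).card ≤
      ((Finset.Icc 1 n).filter fun i => IsPGroup p (P i)).card := by
  classical
  set K : ℕ → Subgroup G := fun j => ⨆ l : {l : ℕ // j ≤ l ∧ l ≤ n}, P l with hK
  have hPK : ∀ j l, j ≤ l → l ≤ n → P l ≤ K j := fun j l h1 h2 =>
    le_iSup (fun x : {l : ℕ // j ≤ l ∧ l ≤ n} => P x) ⟨l, h1, h2⟩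
  have hKle : ∀ j (X : Subgroup G), (∀ l, j ≤ l → l ≤ n → P l ≤ X) → K j ≤ X := by
    intro j X h
    exact iSup_le fun x => h x.1 x.2.1 x.2.2
  have Kanti : ∀ j j', j ≤ j' → K j' ≤ K j := fun j j' h =>
    hKle _ _ fun l h1 h2 => hPK j l (le_trans h h1) h2
  have Ktop : K 1 = ⊤ := by
    have claim : ∀ m, m ≤ n → mulFrom P n m ⊆ (K (n - m + 1) : Set G) := by
      intro m
      induction m with
      | zero =>
        intro _ x hx
        have hx1 : x = 1 := hx
        rw [hx1]
        exact one_mem _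
      | succ m ih =>
        intro hm
        have he : n - (m + 1) + 1 = n - m := by omega
        rw [mulFrom, he]
        rw [Set.mul_subset_iff]
        intro a ha b hb
        have ha' : a ∈ K (n - m) := Kanti (n - m) (n - m + 1) (by omega) (ih (by omega) ha)
        have hb' : b ∈ K (n - m) := hPK (n - m) (n - m) le_rfl (by omega) hb
        exact mul_mem ha' hb'
    rw [eq_top_iff]
    intro x _
    have hx : x ∈ mulFrom P n n := by rw [hprod]; trivial
    have := claim n le_rfl hx
    rwa [show n - n + 1 = 1 by omega] at this
  have conj_mem : ∀ g ∈ K 1, ∀ j, ∀ x ∈ K j, g * x * g⁻¹ ∈ K j := by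
    intro g hg
    refine Subgroup.iSup_induction _
      (C := fun g => ∀ j, ∀ x ∈ K j, g * x * g⁻¹ ∈ K j) hg ?_ ?_ ?_
    · rintro ⟨i, hi1, hi2⟩ y hy j x hx
      refine Subgroup.iSup_induction _ (C := fun x => y * x * y⁻¹ ∈ K j) hx ?_ ?_ ?_
      · rintro ⟨l, hl1, hl2⟩ z hz
        rcases Nat.lt_or_ge i l with h | h
        · exact hPK j l hl1 hl2 (hnorm i l hi1 h hl2 y hy z hz)
        · have hyK : y ∈ K j := hPK j i (le_trans hl1 h) hi2 hy
          exact mul_mem (mul_mem hyK (hPK j l hl1 hl2 hz)) (inv_mem hyK)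
      · simpa using one_mem (K j)
      · intro a b ha hb
        have he : y * (a * b) * y⁻¹ = y * a * y⁻¹ * (y * b * y⁻¹) := by group
        rw [he]; exact mul_mem ha hb
    · intro j x hx
      simpa using hx
    · intro a b ha hb j x hx
      have he : a * b * x * (a * b)⁻¹ = a * (b * x * b⁻¹) * a⁻¹ := by group
      rw [he]
      exact ha j _ (hb j x hx)
  have Knormal : ∀ j, (K j).Normal := by
    intro j
    constructor
    intro x hx g
    exact conj_mem g (by rw [Ktop]; exact Subgroup.mem_top g) j x hx
  have Ksup : ∀ j, 1 ≤ j → j ≤ n → K j = K (j + 1) ⊔ P j := by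
    intro j h1 h2
    refine le_antisymm (hKle _ _ fun l hl1 hl2 => ?_)
      (sup_le (Kanti j (j + 1) (by omega)) (hPK j j le_rfl h2))
    rcases eq_or_lt_of_le hl1 with rfl | h
    · exact le_sup_right
    · exact le_trans (hPK (j + 1) l h hl2) le_sup_left
  have Kstep : ∀ j, 1 ≤ j → j ≤ n → ∀ x ∈ K j, ∃ m : ℕ, x ^ q j ^ m ∈ K (j + 1) := by
    intro j h1 h2 x hx
    haveI := Knormal (j + 1)
    rw [Ksup j h1 h2] at hx
    have hx' : x ∈ (↑(K (j + 1) ⊔ P j) : Set G) := hx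
    rw [Subgroup.normal_mul] at hx'
    obtain ⟨z, hz, y, hy, hzy⟩ := hx'
    obtain ⟨a, ha⟩ := (hq j h1 h2).2 ⟨y, hy⟩
    have ha' : y ^ q j ^ a = 1 := by simpa using congrArg Subtype.val ha
    refine ⟨a, ?_⟩
    set φ := QuotientGroup.mk' (K (j + 1)) with hφ
    have h5 : φ (x ^ q j ^ a) = 1 := by
      rw [← hzy, map_pow, map_mul, show φ z = 1 from (QuotientGroup.eq_one_iff z).2 hz,
        one_mul, ← map_pow, ha', map_one]
    have h6 : x ^ q j ^ a ∈ φ.ker := h5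
    rwa [QuotientGroup.ker_mk'] at h6
  refine ⟨fun i => K (n + 1 - i), ?_, ?_, ?_, fun i => Knormal _, ?_, ?_⟩
  · refine le_antisymm (hKle _ _ fun l h1 h2 => absurd (le_trans h1 h2) (by omega)) bot_le
  · beta_reduce
    rw [show n + 1 - n = 1 by omega, Ktop]
  · intro i hi
    exact Kanti (n + 1 - (i + 1)) (n + 1 - i) (by omega)
  · intro i hi
    have he1 : n + 1 - (i + 1) = n - i := by omega
    have he2 : n + 1 - i = n - i + 1 := by omega
    beta_reduce
    rw [he1, he2]
    by_cases hqj : q (n - i) = p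
    · left
      intro x hx
      obtain ⟨m, hm⟩ := Kstep (n - i) (by omega) (by omega) x hx
      exact ⟨m, by rwa [hqj] at hm⟩
    · right
      intro x hx
      obtain ⟨m, hm⟩ := Kstep (n - i) (by omega) (by omega) x hx
      exact ⟨q (n - i) ^ m, pow_pos (hq (n - i) (by omega) (by omega)).1.pos m,
        Nat.Coprime.pow_left m ((Nat.coprime_primes (hq (n - i) (by omega) (by omega)).1 hp).2 hqj),
        hm⟩
  · refine Finset.card_le_card_of_injOn (fun i => n - i) ?_ ?_
    · intro i hi
      simp only [Finset.coe_filter, Set.mem_setOf_eq, Finset.mem_range] at hi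
      obtain ⟨hin, hleft, hne⟩ := hi
      have he1 : n + 1 - (i + 1) = n - i := by omega
      have he2 : n + 1 - i = n - i + 1 := by omega
      rw [he1] at hleft hne
      rw [he2] at hleft hne
      have hPle : ¬ P (n - i) ≤ K (n - i + 1) := by
        intro hle
        apply hne
        rw [Ksup (n - i) (by omega) (by omega), sup_eq_left.2 hle]
      obtain ⟨y, hyP, hyn⟩ := SetLike.not_le_iff_exists.1 hPle
      have hyK : y ∈ K (n - i) := hPK (n - i) (n - i) le_rfl (by omega) hyP
      obtain ⟨m, hm⟩ := hleft y hyK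
      obtain ⟨a, ha⟩ := (hq (n - i) (by omega) (by omega)).2 ⟨y, hyP⟩
      have ha' : y ^ q (n - i) ^ a = 1 := by simpa using congrArg Subtype.val ha
      have hqj : q (n - i) = p := by
        by_contra hcon
        have hcop : Nat.Coprime (p ^ m) (q (n - i) ^ a) :=
          Nat.Coprime.pow _ _
            ((Nat.coprime_primes hp (hq (n - i) (by omega) (by omega)).1).2 (Ne.symm hcon))
        exact hyn (aux_mem_of_coprime _ ha' hm hcop)
      simp only [Finset.coe_filter, Set.mem_setOf_eq, Finset.mem_Icc]
      refine ⟨⟨by omega, by omega⟩, ?_⟩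
      rw [← hqj]
      exact (hq (n - i) (by omega) (by omega)).2
    · intro i hi j hj hij
      simp only [Finset.coe_filter, Set.mem_setOf_eq, Finset.mem_range] at hi hj
      simp only at hij
      omega

open scoped Pointwise Classical in
/-- **Proposition 1**. If the finite solvable group `G` is the product of the subgroups
of a tower `{P n, …, P 1}`, then for every prime `p` the `p`-length of `G` equals the
number of indices `i` for which `P i` is a `p`-group. -/
theorem pLength_eq_card_pGroups_of_tower
    (G : Type*) [Group G] [Finite G] [Group.IsSolvable G]
    (n : ℕ) (hn : 1 ≤ n) (P : ℕ → Subgroup G)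
    (hT : IsTower n P) (hprod : mulFrom P n n = Set.univ)
    (p : ℕ) (hp : p.Prime) :
    pLength p G = ((Finset.Icc 1 n).filter fun i => IsPGroup p (P i)).card := by
  
  classical
  obtain ⟨hnt, ⟨q, hq, hqne⟩, hnorm, C, hCn, hCdef, hComm⟩ := hT
  obtain ⟨N, hN0, hNn, hmono, hnrm, hstep, hcard⟩ := tower_upper n hn P q hq hnorm hprod p hp
  unfold pLength
  refine le_antisymm ?_ ?_
  · refine le_trans (Nat.sInf_le ?_) hcard
    exact ⟨n, N, hN0, hNn, hmono, hnrm, hstep, rfl⟩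
  · refine le_csInf ⟨_, ⟨n, N, hN0, hNn, hmono, hnrm, hstep, rfl⟩⟩ ?_
    rintro l ⟨k, N', h0, hk, hm, hn', hs, rfl⟩
    exact tower_lower n P hnt q hq hqne C hCn hCdef hComm p hp k N' h0 hk hm hn' hs
end

section
/- Let {P_n,…,P_1} be a tower in a finite solvable group G with G = P_n⋯P_1 and n ≥ 2. Then P_n ≤ ρ_i(G) for every i with 0 ≤ i ≤ n-1, where ρ_0(G)=G, ρ_1(G) is the intersection of the lower central series of G, and ρ_k(G)=ρ_1(ρ_{k-1}(G)) for k ≥ 2. -/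
open Pointwise
open scoped commutatorElement

section TowerAuxiliary

variable {G : Type*} [Group G]

/-- Relative lower central series of a subgroup `H`, as subgroups of the ambient group. -/
def relg (H : Subgroup G) : ℕ → Subgroup G
  | 0 => H
  | i + 1 => ⁅relg H i, H⁆

lemma relg_zero (H : Subgroup G) : relg H 0 = H := rfl

lemma relg_succ (H : Subgroup G) (i : ℕ) : relg H (i + 1) = ⁅relg H i, H⁆ := rfl

lemma relg_le (H : Subgroup G) : ∀ i, relg H i ≤ H
  | 0 => le_rfl
  | i + 1 => by
    rw [relg_succ, Subgroup.commutator_le]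
    intro a ha b hb
    have ha' : a ∈ H := relg_le H i ha
    rw [commutatorElement_def]
    exact mul_mem (mul_mem (mul_mem ha' hb) (inv_mem ha')) (inv_mem hb)

lemma relg_conj (H : Subgroup G) (i : ℕ) {x g : G} (hx : x ∈ H) (hg : g ∈ relg H i) :
    x * g * x⁻¹ ∈ relg H i := by
  induction i generalizing g with
  | zero => exact mul_mem (mul_mem hx hg) (inv_mem hx)
  | succ i ih =>
    rw [relg_succ, Subgroup.commutator_def] at hg
    rw [relg_succ]
    refine Subgroup.closure_induction ?_ ?_ ?_ ?_ hg
    · rintro g ⟨a, ha, b, hb, rfl⟩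
      have key : x * ⁅a, b⁆ * x⁻¹ = ⁅x * a * x⁻¹, x * b * x⁻¹⁆ := by
        simp only [commutatorElement_def]; group
      rw [key]
      exact Subgroup.commutator_mem_commutator (ih ha) (mul_mem (mul_mem hx hb) (inv_mem hx))
    · simpa using one_mem _
    · intro a b _ _ iha ihb
      have : x * (a * b) * x⁻¹ = (x * a * x⁻¹) * (x * b * x⁻¹) := by group
      rw [this]; exact mul_mem iha ihb
    · intro a _ iha
      have : x * a⁻¹ * x⁻¹ = (x * a * x⁻¹)⁻¹ := by group
      rw [this]; exact inv_mem iha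

lemma relg_succ_le (H : Subgroup G) (i : ℕ) : relg H (i + 1) ≤ relg H i := by
  rw [relg_succ, Subgroup.commutator_le]
  intro a ha b hb
  rw [commutatorElement_def]
  have h2 : b * a⁻¹ * b⁻¹ ∈ relg H i := relg_conj H i hb (inv_mem ha)
  simpa [mul_assoc] using mul_mem ha h2

lemma relg_antitone (H : Subgroup G) : Antitone (relg H) :=
  antitone_nat_of_succ_le (relg_succ_le H)

/-- The nilpotent residual `γ_∞(H)` of a subgroup, as a subgroup of the ambient group. -/
def Egrp (H : Subgroup G) : Subgroup G := ⨅ i, relg H i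

lemma Egrp_le (H : Subgroup G) : Egrp H ≤ H := iInf_le (relg H) 0

lemma Egrp_le_relg (H : Subgroup G) (i : ℕ) : Egrp H ≤ relg H i := iInf_le _ i

lemma mem_Egrp {H : Subgroup G} {g : G} : g ∈ Egrp H ↔ ∀ i, g ∈ relg H i := by
  simp only [Egrp, Subgroup.mem_iInf]

lemma Egrp_conj (H : Subgroup G) {x g : G} (hx : x ∈ H) (hg : g ∈ Egrp H) :
    x * g * x⁻¹ ∈ Egrp H := by
  rw [mem_Egrp] at hg ⊢
  exact fun i => relg_conj H i hx (hg i)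

lemma exists_relg_min [Finite G] (H : Subgroup G) : ∃ m, ∀ i, relg H m ≤ relg H i := by
  obtain ⟨m, hm⟩ : ∃ m, Nat.card (relg H m) = sInf (Set.range fun i => Nat.card (relg H i)) := by
    have hne : (Set.range fun i => Nat.card (relg H i)).Nonempty := ⟨_, ⟨0, rfl⟩⟩
    obtain ⟨m, hm⟩ := Nat.sInf_mem hne
    exact ⟨m, hm⟩
  have hmin : ∀ i, Nat.card (relg H m) ≤ Nat.card (relg H i) := fun i => by
    rw [hm]; exact Nat.sInf_le ⟨i, rfl⟩
  have hs : relg H (m + 1) = relg H m :=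
    Subgroup.eq_of_le_of_card_ge (relg_succ_le H m) (hmin (m + 1))
  have hstab : ∀ i, m ≤ i → relg H i = relg H m := by
    intro i hi
    induction i, hi using Nat.le_induction with
    | base => rfl
    | succ i hmi ihs =>
      have : relg H (i + 1) = relg H (m + 1) := by rw [relg_succ, ihs, ← relg_succ]
      rw [this, hs]
  refine ⟨m, fun i => ?_⟩
  rcases le_total i m with h | h
  · exact relg_antitone H h
  · exact (hstab i h).ge

lemma map_lcs (H : Subgroup G) :
    ∀ i, Subgroup.map H.subtype ((⊤ : Subgroup ↥H).lowerCentralSeries i) = relg H i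
  | 0 => by
    rw [Subgroup.lowerCentralSeries_zero, ← MonoidHom.range_eq_map, Subgroup.range_subtype, relg_zero]
  | i + 1 => by
    have h : (⊤ : Subgroup ↥H).lowerCentralSeries (i + 1) = ⁅(⊤ : Subgroup ↥H).lowerCentralSeries i, ⊤⁆ := rfl
    rw [h, Subgroup.map_commutator, map_lcs H i, ← MonoidHom.range_eq_map,
      Subgroup.range_subtype, relg_succ]

lemma map_iInf_lcs (H : Subgroup G) :
    Subgroup.map H.subtype (⨅ i, (⊤ : Subgroup ↥H).lowerCentralSeries i) = Egrp H := by
  apply le_antisymm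
  · rw [Egrp]
    refine le_iInf fun i => ?_
    rw [← map_lcs]
    exact Subgroup.map_mono (iInf_le _ i)
  · intro g hg
    have hgH : g ∈ H := Egrp_le H hg
    refine Subgroup.mem_map.mpr ⟨⟨g, hgH⟩, ?_, rfl⟩
    rw [Subgroup.mem_iInf]
    intro i
    have h1 : g ∈ relg H i := mem_Egrp.mp hg i
    rw [← map_lcs H i] at h1
    obtain ⟨y, hy, hyg⟩ := h1
    have : y = ⟨g, hgH⟩ := Subtype.ext hyg
    rwa [← this]

lemma lcs_map_surj {G' : Type*} [Group G'] (f : G →* G') (hf : Function.Surjective f) :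
    ∀ i, Subgroup.map f ((⊤ : Subgroup G).lowerCentralSeries i) = (⊤ : Subgroup G').lowerCentralSeries i
  | 0 => by
    rw [Subgroup.lowerCentralSeries_zero, Subgroup.lowerCentralSeries_zero]
    exact Subgroup.map_top_of_surjective f hf
  | i + 1 => by
    have h1 : (⊤ : Subgroup G).lowerCentralSeries (i + 1) = ⁅(⊤ : Subgroup G).lowerCentralSeries i, ⊤⁆ := rfl
    have h2 : (⊤ : Subgroup G').lowerCentralSeries (i + 1) = ⁅(⊤ : Subgroup G').lowerCentralSeries i, ⊤⁆ := rfl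
    rw [h1, h2, Subgroup.map_commutator, lcs_map_surj f hf i,
      Subgroup.map_top_of_surjective f hf]

lemma pgroup_elem_pow {K : Subgroup G} {r : ℕ} (hK : IsPGroup r K) {a : G} (ha : a ∈ K) :
    ∃ k, a ^ r ^ k = 1 := by
  obtain ⟨k, hk⟩ := hK ⟨a, ha⟩
  exact ⟨k, by simpa using congrArg Subtype.val hk⟩

lemma comm_eq_one_nilpotent {Q : Type*} [Group Q] [Finite Q] (hnil : Group.IsNilpotent Q)
    {p q : ℕ} (hp : p.Prime) (hq : q.Prime) (hpq : p ≠ q) {x y : Q}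
    (hx : ∃ k, x ^ p ^ k = 1) (hy : ∃ k, y ^ q ^ k = 1) :
    x * y * x⁻¹ * y⁻¹ = 1 := by
  haveI : Fact p.Prime := ⟨hp⟩
  haveI : Fact q.Prime := ⟨hq⟩
  obtain ⟨kx, hkx⟩ := hx
  obtain ⟨ky, hky⟩ := hy
  have hxP : IsPGroup p (Subgroup.zpowers x) := by
    intro g
    obtain ⟨j, hj⟩ := Subgroup.mem_zpowers_iff.mp g.2
    refine ⟨kx, ?_⟩
    have hpow : (g : Q) ^ p ^ kx = 1 := by
      rw [← hj]
      calc (x ^ j) ^ p ^ kx = (x ^ j) ^ ((p ^ kx : ℕ) : ℤ) := (zpow_natCast _ _).symm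
        _ = x ^ (j * ((p ^ kx : ℕ) : ℤ)) := (zpow_mul x j _).symm
        _ = x ^ (((p ^ kx : ℕ) : ℤ) * j) := by rw [mul_comm]
        _ = (x ^ ((p ^ kx : ℕ) : ℤ)) ^ j := zpow_mul x _ j
        _ = 1 := by rw [zpow_natCast, hkx, one_zpow]
    exact Subtype.ext (by simpa using hpow)
  have hyP : IsPGroup q (Subgroup.zpowers y) := by
    intro g
    obtain ⟨j, hj⟩ := Subgroup.mem_zpowers_iff.mp g.2
    refine ⟨ky, ?_⟩
    have hpow : (g : Q) ^ q ^ ky = 1 := by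
      rw [← hj]
      calc (y ^ j) ^ q ^ ky = (y ^ j) ^ ((q ^ ky : ℕ) : ℤ) := (zpow_natCast _ _).symm
        _ = y ^ (j * ((q ^ ky : ℕ) : ℤ)) := (zpow_mul y j _).symm
        _ = y ^ (((q ^ ky : ℕ) : ℤ) * j) := by rw [mul_comm]
        _ = (y ^ ((q ^ ky : ℕ) : ℤ)) ^ j := zpow_mul y _ j
        _ = 1 := by rw [zpow_natCast, hky, one_zpow]
    exact Subtype.ext (by simpa using hpow)
  obtain ⟨S, hSx⟩ := hxP.exists_le_sylow
  obtain ⟨T, hT⟩ := hyP.exists_le_sylow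
  have hsyl : ∀ (r : ℕ) (_ : Fact r.Prime) (R : Sylow r Q), (R : Subgroup Q).Normal :=
    ((isNilpotent_of_finite_tfae (G := Q)).out 0 3).mp hnil
  have hSn := hsyl p ‹Fact p.Prime› S
  have hTn := hsyl q ‹Fact q.Prime› T
  have hxS : x ∈ (S : Subgroup Q) := hSx (Subgroup.mem_zpowers x)
  have hyT : y ∈ (T : Subgroup Q) := hT (Subgroup.mem_zpowers y)
  have hcS : x * y * x⁻¹ * y⁻¹ ∈ (S : Subgroup Q) := by
    have h1 : y * x⁻¹ * y⁻¹ ∈ (S : Subgroup Q) := hSn.conj_mem _ (inv_mem hxS) y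
    simpa [mul_assoc] using mul_mem hxS h1
  have hcT : x * y * x⁻¹ * y⁻¹ ∈ (T : Subgroup Q) :=
    mul_mem (hTn.conj_mem _ hyT x) (inv_mem hyT)
  obtain ⟨a, haS⟩ := S.isPGroup' ⟨_, hcS⟩
  obtain ⟨b, hbT⟩ := T.isPGroup' ⟨_, hcT⟩
  have h1 : (x * y * x⁻¹ * y⁻¹) ^ p ^ a = 1 := by simpa using congrArg Subtype.val haS
  have h2 : (x * y * x⁻¹ * y⁻¹) ^ q ^ b = 1 := by simpa using congrArg Subtype.val hbT
  have hd1 : orderOf (x * y * x⁻¹ * y⁻¹) ∣ p ^ a := orderOf_dvd_of_pow_eq_one h1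
  have hd2 : orderOf (x * y * x⁻¹ * y⁻¹) ∣ q ^ b := orderOf_dvd_of_pow_eq_one h2
  have hcop : Nat.Coprime (p ^ a) (q ^ b) :=
    Nat.Coprime.pow a b ((Nat.coprime_primes hp hq).mpr hpq)
  have : orderOf (x * y * x⁻¹ * y⁻¹) = 1 := Nat.eq_one_of_dvd_coprimes hcop hd1 hd2
  exact orderOf_eq_one_iff.mp this

lemma commutator_mem_Egrp [Finite G] (H : Subgroup G) {a b : G} (ha : a ∈ H) (hb : b ∈ H)
    {p q : ℕ} (hp : p.Prime) (hq : q.Prime) (hpq : p ≠ q)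
    (hap : ∃ k, a ^ p ^ k = 1) (hbq : ∃ k, b ^ q ^ k = 1) :
    a * b * a⁻¹ * b⁻¹ ∈ Egrp H := by
  obtain ⟨m, hm⟩ := exists_relg_min H
  haveI hNnorm : ((Egrp H).subgroupOf H).Normal := by
    constructor
    intro n hn g
    rw [Subgroup.mem_subgroupOf] at hn ⊢
    simpa using Egrp_conj H g.2 hn
  have hlcs_le : (⊤ : Subgroup ↥H).lowerCentralSeries m ≤ (Egrp H).subgroupOf H := by
    intro z hz
    rw [Subgroup.mem_subgroupOf]
    have hz' : (z : G) ∈ relg H m := by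
      rw [← map_lcs H m]; exact ⟨z, hz, rfl⟩
    exact mem_Egrp.mpr fun i => hm i hz'
  have hnil : Group.IsNilpotent (↥H ⧸ (Egrp H).subgroupOf H) := by
    rw [Subgroup.nilpotent_iff_lowerCentralSeries]
    refine ⟨m, ?_⟩
    rw [← lcs_map_surj (QuotientGroup.mk' ((Egrp H).subgroupOf H))
      (QuotientGroup.mk'_surjective _) m, Subgroup.map_eq_bot_iff, QuotientGroup.ker_mk']
    exact hlcs_le
  set π := QuotientGroup.mk' ((Egrp H).subgroupOf H) with hπ
  have h1 : (π ⟨a, ha⟩) * (π ⟨b, hb⟩) * (π ⟨a, ha⟩)⁻¹ * (π ⟨b, hb⟩)⁻¹ = 1 := by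
    refine comm_eq_one_nilpotent hnil hp hq hpq ?_ ?_
    · obtain ⟨k, hk⟩ := hap
      refine ⟨k, ?_⟩
      rw [← map_pow, show ((⟨a, ha⟩ : ↥H) ^ p ^ k) = 1 from Subtype.ext (by simpa using hk),
        map_one]
    · obtain ⟨k, hk⟩ := hbq
      refine ⟨k, ?_⟩
      rw [← map_pow, show ((⟨b, hb⟩ : ↥H) ^ q ^ k) = 1 from Subtype.ext (by simpa using hk),
        map_one]
  have h2 : π ((⟨a, ha⟩ : ↥H) * ⟨b, hb⟩ * (⟨a, ha⟩ : ↥H)⁻¹ * (⟨b, hb⟩ : ↥H)⁻¹) = 1 := by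
    rw [map_mul, map_mul, map_mul, map_inv, map_inv]; exact h1
  have h3 : ((⟨a, ha⟩ : ↥H) * ⟨b, hb⟩ * (⟨a, ha⟩ : ↥H)⁻¹ * (⟨b, hb⟩ : ↥H)⁻¹)
      ∈ (Egrp H).subgroupOf H := by
    have := MonoidHom.mem_ker.mpr h2
    rwa [hπ, QuotientGroup.ker_mk'] at this
  have h4 := Subgroup.mem_subgroupOf.mp h3
  simpa using h4

lemma conj_mem_commutator_left {H₁ H₂ : Subgroup G} {x g : G} (hx : x ∈ H₁)
    (hg : g ∈ ⁅H₁, H₂⁆) : x * g * x⁻¹ ∈ ⁅H₁, H₂⁆ := by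
  rw [Subgroup.commutator_def] at hg
  refine Subgroup.closure_induction ?_ ?_ ?_ ?_ hg
  · rintro g ⟨a, ha, b, hb, rfl⟩
    have key : x * ⁅a, b⁆ * x⁻¹ = ⁅x * a, b⁆ * ⁅x, b⁆⁻¹ := by
      simp only [commutatorElement_def]; group
    rw [key]
    exact mul_mem (Subgroup.commutator_mem_commutator (mul_mem hx ha) hb)
      (inv_mem (Subgroup.commutator_mem_commutator hx hb))
  · simpa using one_mem _
  · intro a b _ _ iha ihb
    have : x * (a * b) * x⁻¹ = (x * a * x⁻¹) * (x * b * x⁻¹) := by group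
    rw [this]; exact mul_mem iha ihb
  · intro a _ iha
    have : x * a⁻¹ * x⁻¹ = (x * a * x⁻¹)⁻¹ := by group
    rw [this]; exact inv_mem iha

lemma mem_mul_of_sup {P S C : Subgroup G} (_hS : S ≤ P) (hC : C ≤ P)
    (hconj : ∀ x ∈ P, ∀ s ∈ S, x * s * x⁻¹ ∈ S) (hsup : S ⊔ C = P) :
    ∀ b ∈ P, ∃ s ∈ S, ∃ c ∈ C, b = s * c := by
  let T : Subgroup G :=
    { carrier := {b | ∃ s ∈ S, ∃ c ∈ C, b = s * c}
      one_mem' := ⟨1, one_mem S, 1, one_mem C, by simp⟩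
      mul_mem' := by
        rintro x y ⟨s₁, hs₁, c₁, hc₁, rfl⟩ ⟨s₂, hs₂, c₂, hc₂, rfl⟩
        exact ⟨s₁ * (c₁ * s₂ * c₁⁻¹), mul_mem hs₁ (hconj _ (hC hc₁) _ hs₂), c₁ * c₂,
          mul_mem hc₁ hc₂, by group⟩
      inv_mem' := by
        rintro x ⟨s, hs, c, hc, rfl⟩
        refine ⟨c⁻¹ * s⁻¹ * c, ?_, c⁻¹, inv_mem hc, by group⟩
        simpa using hconj c⁻¹ (inv_mem (hC hc)) s⁻¹ (inv_mem hs) }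
  intro b hb
  have hT : P ≤ T := by
    rw [← hsup]
    refine sup_le (fun s hs => ⟨s, hs, 1, one_mem C, by simp⟩)
      (fun c hc => ⟨1, one_mem S, c, hc, by simp⟩)
  exact hT hb

/-- Iterated nilpotent residual. -/
def Eiter : Subgroup G → ℕ → Subgroup G
  | H, 0 => H
  | H, k + 1 => Eiter (Egrp H) k

lemma Eiter_succ : ∀ (k : ℕ) (H : Subgroup G), Eiter H (k + 1) = Egrp (Eiter H k)
  | 0, _ => rfl
  | k + 1, H => Eiter_succ k (Egrp H)

lemma Eiter_le_of_le (H : Subgroup G) {i j : ℕ} (h : i ≤ j) : Eiter H j ≤ Eiter H i := by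
  induction j, h using Nat.le_induction with
  | base => exact le_rfl
  | succ j hij ih =>
    rw [Eiter_succ]
    exact le_trans (Egrp_le _) ih

end TowerAuxiliary
section TowerMain

variable {G : Type*} [Group G]

lemma tower_main [Finite G] :
    ∀ (n : ℕ) (H : Subgroup G) (P C : ℕ → Subgroup G) (p : ℕ → ℕ),
    (∀ i, 1 ≤ i → i ≤ n → P i ≤ H) →
    (∀ i, 1 ≤ i → i ≤ n → (p i).Prime ∧ IsPGroup (p i) (P i)) →
    (∀ i, 1 ≤ i → i + 1 ≤ n → p (i + 1) ≠ p i) →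
    (∀ i j, 1 ≤ i → i < j → j ≤ n → ∀ x ∈ P i, ∀ y ∈ P j, x * y * x⁻¹ ∈ P j) →
    (∀ i, 1 ≤ i → i ≤ n → C i ≤ P i) →
    (C n = ⊥) →
    (∀ i, 1 ≤ i → i < n → ∀ c ∈ C i, ∀ y ∈ P (i + 1), c * y * c⁻¹ * y⁻¹ ∈ C (i + 1)) →
    (∀ i j, 1 ≤ i → i ≤ j → j ≤ n → ∀ x ∈ P i, ∀ c ∈ C j, x * c * x⁻¹ ∈ C j) →
    (∀ i, 2 ≤ i → i ≤ n → ⁅P i, P (i - 1)⁆ ⊔ C i = P i) →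
    1 ≤ n → P n ≤ Eiter H (n - 1) := by
  intro n
  induction n with
  | zero => intro H P C p _ _ _ _ _ _ _ _ _ h; omega
  | succ n ih =>
    intro H P C p hPH hp hpp hnorm hCP hCn hchain hCnorm hcomm _
    rcases Nat.eq_zero_or_pos n with rfl | hn1
    · exact hPH 1 le_rfl le_rfl
    obtain ⟨m, rfl⟩ : ∃ m, n = m + 1 := ⟨n - 1, by omega⟩
    -- total height is m + 2
    set N' := Egrp H with hN'
    -- Step A : adjacent commutators land in the nilpotent residual of H
    have hadj : ∀ k, 2 ≤ k → k ≤ m + 2 → ⁅P k, P (k - 1)⁆ ≤ N' := by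
      intro k hk2 hkn
      rw [Subgroup.commutator_le]
      intro a ha b hb
      obtain ⟨hpk, hPk⟩ := hp k (by omega) hkn
      obtain ⟨hpk1, hPk1⟩ := hp (k - 1) (by omega) (by omega)
      have hne : p k ≠ p (k - 1) := by
        have h := hpp (k - 1) (by omega) (by omega)
        rwa [show k - 1 + 1 = k from by omega] at h
      rw [commutatorElement_def]
      exact commutator_mem_Egrp H (hPH k (by omega) hkn ha)
        (hPH (k - 1) (by omega) (by omega) hb) hpk hpk1 hne
        (pgroup_elem_pow hPk ha) (pgroup_elem_pow hPk1 hb)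
    -- Step B : the top group lies in the residual
    have htop : P (m + 2) ≤ N' := by
      have h7 := hcomm (m + 2) (by omega) le_rfl
      rw [hCn, sup_bot_eq] at h7
      rw [← h7]
      exact hadj (m + 2) (by omega) le_rfl
    -- conjugation facts
    have hN'conj : ∀ x ∈ H, ∀ g ∈ N', x * g * x⁻¹ ∈ N' := fun x hx g hg => Egrp_conj H hx hg
    -- Step C : the crux, condition (3) for the intersected system
    have hcrux : ∀ k, 3 ≤ k → k ≤ m + 2 →
        ⁅P k ⊓ N', P (k - 1) ⊓ N'⁆ ⊔ (C k ⊓ N') = P k ⊓ N' := by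
      intro k hk3 hkn
      have ek : k - 1 + 1 = k := by omega
      have hA : ⁅P k, P (k - 1)⁆ ≤ N' := hadj k (by omega) hkn
      have hA2 : ⁅P (k - 1), P (k - 1 - 1)⁆ ≤ N' := hadj (k - 1) (by omega) (by omega)
      have hAP : ⁅P k, P (k - 1)⁆ ≤ P k := by
        rw [Subgroup.commutator_le]
        intro a ha b hb
        rw [commutatorElement_def]
        have h2 : b * a⁻¹ * b⁻¹ ∈ P k :=
          hnorm (k - 1) k (by omega) (by omega) hkn b hb a⁻¹ (inv_mem ha)
        simpa [mul_assoc] using mul_mem ha h2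
      have hA2P : ⁅P (k - 1), P (k - 1 - 1)⁆ ≤ P (k - 1) := by
        rw [Subgroup.commutator_le]
        intro a ha b hb
        rw [commutatorElement_def]
        have h2 : b * a⁻¹ * b⁻¹ ∈ P (k - 1) :=
          hnorm (k - 1 - 1) (k - 1) (by omega) (by omega) (by omega) b hb a⁻¹ (inv_mem ha)
        simpa [mul_assoc] using mul_mem ha h2
      have hASk : ⁅P k, P (k - 1)⁆ ≤ P k ⊓ N' := le_inf hAP hA
      have hA2Sk : ⁅P (k - 1), P (k - 1 - 1)⁆ ≤ P (k - 1) ⊓ N' := le_inf hA2P hA2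
      -- decompositions
      have hPk_eq : (P k ⊓ N') ⊔ C k = P k := by
        apply le_antisymm (sup_le inf_le_left (hCP k (by omega) hkn))
        calc P k = ⁅P k, P (k - 1)⁆ ⊔ C k := (hcomm k (by omega) hkn).symm
          _ ≤ (P k ⊓ N') ⊔ C k := sup_le_sup_right hASk _
      have hPk1_eq : (P (k - 1) ⊓ N') ⊔ C (k - 1) = P (k - 1) := by
        apply le_antisymm (sup_le inf_le_left (hCP (k - 1) (by omega) (by omega)))
        calc P (k - 1) = ⁅P (k - 1), P (k - 1 - 1)⁆ ⊔ C (k - 1) :=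
              (hcomm (k - 1) (by omega) (by omega)).symm
          _ ≤ (P (k - 1) ⊓ N') ⊔ C (k - 1) := sup_le_sup_right hA2Sk _
      have hSkconj : ∀ x ∈ P k, ∀ s ∈ P k ⊓ N', x * s * x⁻¹ ∈ P k ⊓ N' := by
        intro x hx s hs
        obtain ⟨hs1, hs2⟩ := Subgroup.mem_inf.mp hs
        exact Subgroup.mem_inf.mpr ⟨(P k).mul_mem ((P k).mul_mem hx hs1) ((P k).inv_mem hx),
          hN'conj x (hPH k (by omega) hkn hx) s hs2⟩
      have hSk1conj : ∀ x ∈ P (k - 1), ∀ s ∈ P (k - 1) ⊓ N', x * s * x⁻¹ ∈ P (k - 1) ⊓ N' := by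
        intro x hx s hs
        obtain ⟨hs1, hs2⟩ := Subgroup.mem_inf.mp hs
        exact Subgroup.mem_inf.mpr
          ⟨(P (k - 1)).mul_mem ((P (k - 1)).mul_mem hx hs1) ((P (k - 1)).inv_mem hx),
          hN'conj x (hPH (k - 1) (by omega) (by omega) hx) s hs2⟩
      have hdecK : ∀ a ∈ P k, ∃ s ∈ P k ⊓ N', ∃ c ∈ C k, a = s * c :=
        mem_mul_of_sup inf_le_left (hCP k (by omega) hkn) hSkconj hPk_eq
      have hdecK1 : ∀ b ∈ P (k - 1), ∃ s ∈ P (k - 1) ⊓ N', ∃ c ∈ C (k - 1), b = s * c :=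
        mem_mul_of_sup inf_le_left (hCP (k - 1) (by omega) (by omega)) hSk1conj hPk1_eq
      -- conjugation preserves C k ⊓ N'
      have hCppconj : ∀ i, 1 ≤ i → i ≤ k → ∀ w ∈ P i, ∀ z ∈ C k ⊓ N', w * z * w⁻¹ ∈ C k ⊓ N' := by
        intro i h1 h2 w hw z hz
        obtain ⟨hz1, hz2⟩ := Subgroup.mem_inf.mp hz
        exact Subgroup.mem_inf.mpr ⟨hCnorm i k h1 h2 hkn w hw z hz1,
          hN'conj w (hPH i h1 (le_trans h2 hkn) hw) z hz2⟩
      -- key commutator inclusions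
      have hPCk1 : ∀ a ∈ P k, ∀ c ∈ C (k - 1), a * c * a⁻¹ * c⁻¹ ∈ C k ⊓ N' := by
        intro a ha c hc
        refine Subgroup.mem_inf.mpr ⟨?_, ?_⟩
        · have h1 := hchain (k - 1) (by omega) (by omega) c hc
          rw [ek] at h1
          have h2 := h1 a ha
          have e : a * c * a⁻¹ * c⁻¹ = (c * a * c⁻¹ * a⁻¹)⁻¹ := by group
          rw [e]
          exact (C k).inv_mem h2
        · have h3 : a * c * a⁻¹ * c⁻¹ ∈ ⁅P k, P (k - 1)⁆ := by
            rw [← commutatorElement_def]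
            exact Subgroup.commutator_mem_commutator ha (hCP (k - 1) (by omega) (by omega) hc)
          exact hA h3
      have hCkSk1 : ∀ c' ∈ C k, ∀ s ∈ P (k - 1) ⊓ N', c' * s * c'⁻¹ * s⁻¹ ∈ C k ⊓ N' := by
        intro c' hc' s hs
        obtain ⟨hs1, hs2⟩ := Subgroup.mem_inf.mp hs
        refine Subgroup.mem_inf.mpr ⟨?_, ?_⟩
        · have h1 : s * c'⁻¹ * s⁻¹ ∈ C k :=
            hCnorm (k - 1) k (by omega) (by omega) hkn s hs1 c'⁻¹ ((C k).inv_mem hc')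
          have e : c' * s * c'⁻¹ * s⁻¹ = c' * (s * c'⁻¹ * s⁻¹) := by group
          rw [e]
          exact (C k).mul_mem hc' h1
        · have h1 : c' * s * c'⁻¹ ∈ N' :=
            hN'conj c' (hPH k (by omega) hkn (hCP k (by omega) hkn hc')) s hs2
          exact N'.mul_mem h1 (N'.inv_mem hs2)
      -- M := ⁅Sk, Sk1⁆ ⊔ Cpp and its properties
      have hMle : ⁅P k ⊓ N', P (k - 1) ⊓ N'⁆ ⊔ (C k ⊓ N') ≤ P k ⊓ N' :=
        sup_le (le_trans (Subgroup.commutator_mono inf_le_left inf_le_left) hASk)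
          (le_inf (le_trans inf_le_left (hCP k (by omega) hkn)) inf_le_right)
      -- A ≤ M
      have hAM : ⁅P k, P (k - 1)⁆ ≤ ⁅P k ⊓ N', P (k - 1) ⊓ N'⁆ ⊔ (C k ⊓ N') := by
        rw [Subgroup.commutator_le]
        intro a ha b hb
        obtain ⟨x, hx, c', hc', rfl⟩ := hdecK a ha
        obtain ⟨s, hs, c, hc, rfl⟩ := hdecK1 b hb
        have key : ⁅x * c', s * c⁆ =
            (x * (c' * s * c'⁻¹ * s⁻¹) * x⁻¹) * ⁅x, s⁆ *
              (s * ((x * c') * c * (x * c')⁻¹ * c⁻¹) * s⁻¹) := by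
          simp only [commutatorElement_def]; group
        rw [key]
        have hx1 : x ∈ P k := (Subgroup.mem_inf.mp hx).1
        have hs1 : s ∈ P (k - 1) := (Subgroup.mem_inf.mp hs).1
        have m1 : x * (c' * s * c'⁻¹ * s⁻¹) * x⁻¹ ∈ C k ⊓ N' :=
          hCppconj k (by omega) le_rfl x hx1 _ (hCkSk1 c' hc' s hs)
        have m2 : ⁅x, s⁆ ∈ ⁅P k ⊓ N', P (k - 1) ⊓ N'⁆ :=
          Subgroup.commutator_mem_commutator hx hs
        have m3 : s * ((x * c') * c * (x * c')⁻¹ * c⁻¹) * s⁻¹ ∈ C k ⊓ N' :=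
          hCppconj (k - 1) (by omega) (by omega) s hs1 _ (hPCk1 (x * c') ha c hc)
        exact mul_mem (mul_mem (Subgroup.mem_sup_right m1) (Subgroup.mem_sup_left m2))
          (Subgroup.mem_sup_right m3)
      -- Sk ≤ M
      have hSkM : P k ⊓ N' ≤ ⁅P k ⊓ N', P (k - 1) ⊓ N'⁆ ⊔ (C k ⊓ N') := by
        intro z hz
        obtain ⟨hzP, hzN⟩ := Subgroup.mem_inf.mp hz
        have hdecA : ∀ a ∈ P k, ∃ s ∈ ⁅P k, P (k - 1)⁆, ∃ c ∈ C k, a = s * c :=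
          mem_mul_of_sup hAP (hCP k (by omega) hkn)
            (fun x hx s hs => conj_mem_commutator_left hx hs) (hcomm k (by omega) hkn)
        obtain ⟨a, haA, c, hc, rfl⟩ := hdecA z hzP
        have hcN : c ∈ N' := by
          have h1 : a⁻¹ * (a * c) = c := by group
          rw [← h1]
          exact N'.mul_mem (N'.inv_mem (hA haA)) hzN
        exact mul_mem (hAM haA) (Subgroup.mem_sup_right (Subgroup.mem_inf.mpr ⟨hc, hcN⟩))
      exact le_antisymm hMle hSkM
    -- Step D : apply the induction hypothesis inside N'
    have hyp1 : ∀ i, 1 ≤ i → i ≤ m + 1 → P (i + 1) ⊓ N' ≤ N' := fun i _ _ => inf_le_right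
    have hyp2 : ∀ i, 1 ≤ i → i ≤ m + 1 →
        (p (i + 1)).Prime ∧ IsPGroup (p (i + 1)) ↥(P (i + 1) ⊓ N') := by
      intro i h1 h2
      exact ⟨(hp (i + 1) (by omega) (by omega)).1,
        IsPGroup.to_le (hp (i + 1) (by omega) (by omega)).2 inf_le_left⟩
    have hyp3 : ∀ i, 1 ≤ i → i + 1 ≤ m + 1 → p (i + 1 + 1) ≠ p (i + 1) := by
      intro i h1 h2
      exact hpp (i + 1) (by omega) (by omega)
    have hyp4 : ∀ i j, 1 ≤ i → i < j → j ≤ m + 1 →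
        ∀ x ∈ P (i + 1) ⊓ N', ∀ y ∈ P (j + 1) ⊓ N', x * y * x⁻¹ ∈ P (j + 1) ⊓ N' := by
      intro i j h1 h2 h3 x hx y hy
      obtain ⟨hx1, hx2⟩ := Subgroup.mem_inf.mp hx
      obtain ⟨hy1, hy2⟩ := Subgroup.mem_inf.mp hy
      exact Subgroup.mem_inf.mpr
        ⟨hnorm (i + 1) (j + 1) (by omega) (by omega) (by omega) x hx1 y hy1,
          N'.mul_mem (N'.mul_mem hx2 hy2) (N'.inv_mem hx2)⟩
    have hyp5 : ∀ i, 1 ≤ i → i ≤ m + 1 → C (i + 1) ⊓ N' ≤ P (i + 1) ⊓ N' := by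
      intro i h1 h2
      exact inf_le_inf_right _ (hCP (i + 1) (by omega) (by omega))
    have hyp6 : C (m + 1 + 1) ⊓ N' = ⊥ := by rw [hCn, bot_inf_eq]
    have hyp7 : ∀ i, 1 ≤ i → i < m + 1 → ∀ c ∈ C (i + 1) ⊓ N', ∀ y ∈ P (i + 1 + 1) ⊓ N',
        c * y * c⁻¹ * y⁻¹ ∈ C (i + 1 + 1) ⊓ N' := by
      intro i h1 h2 c hc y hy
      obtain ⟨hc1, hc2⟩ := Subgroup.mem_inf.mp hc
      obtain ⟨hy1, hy2⟩ := Subgroup.mem_inf.mp hy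
      exact Subgroup.mem_inf.mpr ⟨hchain (i + 1) (by omega) (by omega) c hc1 y hy1,
        N'.mul_mem (N'.mul_mem (N'.mul_mem hc2 hy2) (N'.inv_mem hc2)) (N'.inv_mem hy2)⟩
    have hyp8 : ∀ i j, 1 ≤ i → i ≤ j → j ≤ m + 1 →
        ∀ x ∈ P (i + 1) ⊓ N', ∀ c ∈ C (j + 1) ⊓ N', x * c * x⁻¹ ∈ C (j + 1) ⊓ N' := by
      intro i j h1 h2 h3 x hx c hc
      obtain ⟨hx1, hx2⟩ := Subgroup.mem_inf.mp hx
      obtain ⟨hc1, hc2⟩ := Subgroup.mem_inf.mp hc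
      exact Subgroup.mem_inf.mpr
        ⟨hCnorm (i + 1) (j + 1) (by omega) (by omega) (by omega) x hx1 c hc1,
          N'.mul_mem (N'.mul_mem hx2 hc2) (N'.inv_mem hx2)⟩
    have hyp9 : ∀ i, 2 ≤ i → i ≤ m + 1 →
        ⁅P (i + 1) ⊓ N', P (i - 1 + 1) ⊓ N'⁆ ⊔ (C (i + 1) ⊓ N') = P (i + 1) ⊓ N' := by
      intro i h1 h2
      have h := hcrux (i + 1) (by omega) (by omega)
      rw [show i + 1 - 1 = i from by omega] at h
      rw [show i - 1 + 1 = i from by omega]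
      exact h
    have hfin := ih N' (fun i => P (i + 1) ⊓ N') (fun i => C (i + 1) ⊓ N') (fun i => p (i + 1))
      hyp1 hyp2 hyp3 hyp4 hyp5 hyp6 hyp7 hyp8 hyp9 (by omega)
    have h1 : P (m + 2) ≤ P (m + 1 + 1) ⊓ N' := le_inf le_rfl htop
    exact le_trans h1 hfin

end TowerMain
section TowerGlue

variable {G : Type*} [Group G]

lemma rho_succ_eq (G : Type*) [Group G] (k : ℕ) : rho G (k + 1) = Egrp (rho G k) := by
  rw [rho]
  exact map_iInf_lcs (rho G k)

lemma rho_eq_Eiter (G : Type*) [Group G] : ∀ i, rho G i = Eiter (⊤ : Subgroup G) i := by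
  intro i
  induction i with
  | zero => rw [rho]; rfl
  | succ i ihi => rw [rho_succ_eq, ihi, Eiter_succ]

end TowerGlue

open scoped Pointwise in
/-- For a tower `{P n, …, P 1}` of height `n ≥ 2` in a finite solvable group `G` with
`G = P n ⋯ P 1`, one has `P n ≤ ρ_i(G)` for all `0 ≤ i ≤ n - 1`. -/
theorem top_subgroup_le_rho_of_tower
    (G : Type*) [Group G] [Finite G] [Group.IsSolvable G]
    (n : ℕ) (hn : 2 ≤ n) (P : ℕ → Subgroup G)
    (hT : IsTower n P) (hprod : mulFrom P n n = Set.univ) :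
    ∀ i ≤ n - 1, P n ≤ rho G i := by
  obtain ⟨hnt, ⟨p, hp, hpp⟩, hnorm, C, hCn, hCdef, hcomm⟩ := hT
  have hCP : ∀ i, 1 ≤ i → i ≤ n → C i ≤ P i := by
    intro i h1 h2
    rcases eq_or_lt_of_le h2 with rfl | hlt
    · rw [hCn]; exact bot_le
    · intro c hc
      have hmem : c ∈ (C i : Set G) := hc
      rw [hCdef i h1 hlt] at hmem
      exact hmem.1
  have hchain : ∀ i, 1 ≤ i → i < n → ∀ c ∈ C i, ∀ y ∈ P (i + 1),
      c * y * c⁻¹ * y⁻¹ ∈ C (i + 1) := by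
    intro i h1 h2 c hc y hy
    have hmem : c ∈ (C i : Set G) := hc
    rw [hCdef i h1 h2] at hmem
    exact hmem.2 y hy
  have hCnormAux : ∀ d j, j + d = n → 1 ≤ j → ∀ i, 1 ≤ i → i ≤ j →
      ∀ x ∈ P i, ∀ c ∈ C j, x * c * x⁻¹ ∈ C j := by
    intro d
    induction d with
    | zero =>
      intro j hj _ i _ _ x hx c hc
      obtain rfl : j = n := by omega
      rw [hCn] at hc ⊢
      rw [Subgroup.mem_bot] at hc ⊢
      rw [hc]
      group
    | succ d ihd =>
      intro j hjd hj1 i hi1 hij x hx c hc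
      have hjn : j < n := by omega
      have hcmem : c ∈ (C j : Set G) := hc
      rw [hCdef j hj1 hjn] at hcmem
      have hxPj : x * c * x⁻¹ ∈ P j := by
        rcases eq_or_lt_of_le hij with rfl | hlt
        · exact mul_mem (mul_mem hx hcmem.1) (inv_mem hx)
        · exact hnorm i j hi1 hlt (by omega) x hx c hcmem.1
      have hgoal : x * c * x⁻¹ ∈ (C j : Set G) := by
        rw [hCdef j hj1 hjn]
        refine ⟨hxPj, fun y hy => ?_⟩
        have hy' : x⁻¹ * y * x ∈ P (j + 1) := by
          have h := hnorm i (j + 1) hi1 (by omega) (by omega) x⁻¹ (inv_mem hx) y hy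
          simpa using h
        have h1 := hcmem.2 _ hy'
        have h2 := ihd (j + 1) (by omega) (by omega) i hi1 (by omega) x hx _ h1
        have e : x * (c * (x⁻¹ * y * x) * c⁻¹ * (x⁻¹ * y * x)⁻¹) * x⁻¹
            = (x * c * x⁻¹) * y * (x * c * x⁻¹)⁻¹ * y⁻¹ := by group
        rwa [e] at h2
      exact hgoal
  have hCnorm : ∀ i j, 1 ≤ i → i ≤ j → j ≤ n → ∀ x ∈ P i, ∀ c ∈ C j, x * c * x⁻¹ ∈ C j :=
    fun i j h1 h2 h3 => hCnormAux (n - j) j (by omega) (by omega) i h1 h2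
  intro i hi
  have hmain : P n ≤ Eiter (⊤ : Subgroup G) (n - 1) :=
    tower_main n ⊤ P C p (fun _ _ _ => le_top) hp hpp hnorm hCP hCn hchain hCnorm hcomm
      (by omega)
  rw [rho_eq_Eiter]
  exact hmain.trans (Eiter_le_of_le _ hi)
end

section
/- Let {P_n,…,P_1} be a tower of height n ≥ 2 in a finite solvable group G with G = P_n⋯P_1, such that V = P_n is a minimal normal subgroup of G. Then, writing X = P_{n-1}⋯P_1, one has V ∩ X = 1, so G is the internal semidirect product of V and X. -/
open Pointwise

open scoped Pointwise in
lemma mulFrom_split {G : Type*} [Group G] (P : ℕ → Subgroup G) (n k : ℕ) :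
    mulFrom P n (k + 1) = (P n : Set G) * mulFrom P (n - 1) k := by
  induction k with
  | zero => simp [mulFrom]
  | succ k ih =>
      have h : n - (k + 1) = n - 1 - k := by omega
      calc mulFrom P n (k + 2) = mulFrom P n (k + 1) * (P (n - (k + 1)) : Set G) := rfl
        _ = ((P n : Set G) * mulFrom P (n - 1) k) * (P (n - 1 - k) : Set G) := by rw [ih, h]
        _ = (P n : Set G) * (mulFrom P (n - 1) k * (P (n - 1 - k) : Set G)) := mul_assoc _ _ _
        _ = (P n : Set G) * mulFrom P (n - 1) (k + 1) := rfl

open scoped Pointwise in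
lemma mulFrom_subset_subgroup {G : Type*} [Group G] (P : ℕ → Subgroup G) (m : ℕ)
    (N : Subgroup G) :
    ∀ k, (∀ t, t < k → (P (m - t) : Set G) ⊆ N) → mulFrom P m k ⊆ (N : Set G) := by
  intro k
  induction k with
  | zero =>
      intro _ x hx
      have hx1 : x = 1 := hx
      rw [hx1]; exact N.one_mem
  | succ k ih =>
      intro h x hx
      rcases Set.mem_mul.mp hx with ⟨a, ha, b, hb, rfl⟩
      exact N.mul_mem (ih (fun t ht => h t (Nat.lt_succ_of_lt ht)) ha)
        (h k (Nat.lt_succ_self k) hb)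

open scoped Pointwise in
lemma mulFrom_isSubgroup {G : Type*} [Group G] (P : ℕ → Subgroup G) (m : ℕ)
    (hnorm : ∀ i j, 1 ≤ i → i < j → j ≤ m → ∀ x ∈ P i, ∀ y ∈ P j, x * y * x⁻¹ ∈ P j) :
    ∀ k, k ≤ m → ∃ X : Subgroup G, (X : Set G) = mulFrom P m k ∧
      ∀ j, 1 ≤ j → j ≤ m - k → ∀ x ∈ P j, ∀ y : G, y ∈ X → x * y * x⁻¹ ∈ X := by
  intro k
  induction k with
  | zero =>
      intro _
      refine ⟨⊥, by rw [Subgroup.coe_bot]; rfl, ?_⟩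
      intro j _ _ x _ y hy
      rw [Subgroup.mem_bot] at hy
      subst hy
      simp
  | succ k ih =>
      intro hk
      obtain ⟨X, hX, hXnorm⟩ := ih (Nat.le_of_succ_le hk)
      have hmk1 : 1 ≤ m - k := by omega
      have hq : ∀ x ∈ P (m - k), ∀ y : G, y ∈ X → x * y * x⁻¹ ∈ X :=
        hXnorm (m - k) hmk1 le_rfl
      refine ⟨{
        carrier := (X : Set G) * (P (m - k) : Set G)
        one_mem' := ⟨1, X.one_mem, 1, (P (m - k)).one_mem, one_mul 1⟩
        mul_mem' := ?_
        inv_mem' := ?_ }, ?_, ?_⟩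
      · rintro a b ⟨x1, hx1, q1, hq1, rfl⟩ ⟨x2, hx2, q2, hq2, rfl⟩
        refine ⟨x1 * (q1 * x2 * q1⁻¹), X.mul_mem hx1 (hq q1 hq1 x2 hx2),
          q1 * q2, (P (m - k)).mul_mem hq1 hq2, by group⟩
      · rintro a ⟨x1, hx1, q1, hq1, rfl⟩
        refine ⟨q1⁻¹ * x1⁻¹ * (q1⁻¹)⁻¹, hq q1⁻¹ ((P (m - k)).inv_mem hq1) x1⁻¹ (X.inv_mem hx1),
          q1⁻¹, (P (m - k)).inv_mem hq1, by group⟩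
      · show (X : Set G) * (P (m - k) : Set G) = mulFrom P m (k + 1)
        rw [hX]; rfl
      · intro j hj1 hj2 x hx y hy
        rcases hy with ⟨a, ha, q, hqm, rfl⟩
        have h1 : x * a * x⁻¹ ∈ X := hXnorm j hj1 (by omega) x hx a ha
        have h2 : x * q * x⁻¹ ∈ P (m - k) := hnorm j (m - k) hj1 (by omega) (by omega) x hx q hqm
        exact ⟨x * a * x⁻¹, h1, x * q * x⁻¹, h2, by group⟩

open scoped Pointwise in
/-- If `{P n, …, P 1}` is a tower of height `n ≥ 2` in a finite solvable group with
`G = P n ⋯ P 1` and `V = P n` is a minimal normal subgroup of `G`, then with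
`X = P (n-1) ⋯ P 1` one has `V ∩ X = 1`; hence `G` is the internal semidirect product
of `V` and `X`. -/
theorem tower_semidirect_of_minimal_normal
    (G : Type*) [Group G] [Finite G] [Group.IsSolvable G]
    (n : ℕ) (hn : 2 ≤ n) (P : ℕ → Subgroup G)
    (hT : IsTower n P) (hprod : mulFrom P n n = Set.univ)
    (hnormal : (P n).Normal) (hne : P n ≠ ⊥)
    (hmin : ∀ K : Subgroup G, K.Normal → K ≤ P n → K = ⊥ ∨ K = P n) :
    (P n : Set G) ∩ mulFrom P (n - 1) (n - 1) = ({1} : Set G) ∧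
    (P n : Set G) * mulFrom P (n - 1) (n - 1) = Set.univ := by
  obtain ⟨hnontriv, ⟨p, hp, hpne⟩, hnorm2, ⟨C, hCn, hCdef, hcomm⟩⟩ := hT
  -- the subgroup X with carrier P (n-1) ⋯ P 1
  obtain ⟨X, hX, -⟩ := mulFrom_isSubgroup P (n - 1)
    (fun i j h1 h2 h3 => hnorm2 i j h1 h2 (by omega)) (n - 1) le_rfl
  -- splitting of the product
  have hsplit : (P n : Set G) * mulFrom P (n - 1) (n - 1) = Set.univ := by
    have h := mulFrom_split P n (n - 1)
    have hn1 : n - 1 + 1 = n := by omega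
    rw [hn1] at h
    rw [← h, hprod]
  have hsplitX : (P n : Set G) * (X : Set G) = Set.univ := by rw [hX]; exact hsplit
  -- P n is abelian
  have hab : ∀ a ∈ P n, ∀ b ∈ P n, a * b = b * a := by
    haveI := hnormal
    have hle : ⁅P n, P n⁆ ≤ P n := Subgroup.commutator_le_left (P n) (P n)
    rcases hmin ⁅P n, P n⁆ (Subgroup.commutator_normal (P n) (P n)) hle with h | h
    · intro a ha b hb
      have := Subgroup.commutator_le.mp (le_of_eq h) a ha b hb
      rw [Subgroup.mem_bot, commutatorElement_def] at this
      have h2 : a * b * a⁻¹ * b⁻¹ * (b * a) = 1 * (b * a) := by rw [this]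
      rw [one_mul] at h2
      rw [← h2]; group
    · exfalso
      have hD : ∀ k, P n ≤ derivedSeries G k := by
        intro k
        induction k with
        | zero => exact le_top
        | succ k ihk =>
            calc P n = ⁅P n, P n⁆ := h.symm
              _ ≤ ⁅derivedSeries G k, derivedSeries G k⁆ := Subgroup.commutator_mono ihk ihk
      obtain ⟨k, hk⟩ := (inferInstance : Group.IsSolvable G).solvable
      exact hne (le_bot_iff.mp (hk ▸ hD k))
  -- D := P n ⊓ X is normal in G
  have hDnormal : (P n ⊓ X).Normal := by
    constructor
    intro d hd g
    have hg : g ∈ (P n : Set G) * (X : Set G) := by rw [hsplitX]; trivial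
    rcases Set.mem_mul.mp hg with ⟨v, hv, x, hx, rfl⟩
    have hxX : x ∈ X := hx
    have hb : x * d * x⁻¹ ∈ P n ⊓ X :=
      ⟨hnormal.conj_mem d hd.1 x, X.mul_mem (X.mul_mem hxX hd.2) (X.inv_mem hxX)⟩
    have hcommv : v * (x * d * x⁻¹) = (x * d * x⁻¹) * v := hab v hv _ hb.1
    have heq : v * x * d * (v * x)⁻¹ = x * d * x⁻¹ := by
      have : v * x * d * (v * x)⁻¹ = v * (x * d * x⁻¹) * v⁻¹ := by group
      rw [this, hcommv]; group
    rw [heq]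
    exact hb
  rcases hmin (P n ⊓ X) hDnormal inf_le_left with hD | hD
  · constructor
    · rw [← hX, ← Subgroup.coe_inf, hD, Subgroup.coe_bot]
    · exact hsplit
  · -- impossible case: P n ≤ X
    exfalso
    have hVX : P n ≤ X := by rw [← hD]; exact inf_le_right
    -- then X = ⊤, so P (n-1) is normal in G
    have hXtop : ∀ g : G, g ∈ X := by
      intro g
      have hg : g ∈ (P n : Set G) * (X : Set G) := by rw [hsplitX]; trivial
      rcases Set.mem_mul.mp hg with ⟨v, hv, x, hx, rfl⟩
      exact X.mul_mem (hVX hv) hx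
    have hNsub : mulFrom P (n - 1) (n - 1) ⊆ (Subgroup.normalizer (P (n - 1) : Set G) : Set G) := by
      apply mulFrom_subset_subgroup
      intro t ht y hy
      rcases Nat.eq_zero_or_pos t with rfl | htpos
      · exact Subgroup.le_normalizer hy
      · rw [SetLike.mem_coe, Subgroup.mem_normalizer_iff]
        intro h
        constructor
        · intro hh
          exact hnorm2 (n - 1 - t) (n - 1) (by omega) (by omega) (by omega) y hy h hh
        · intro hh
          have := hnorm2 (n - 1 - t) (n - 1) (by omega) (by omega) (by omega)
            y⁻¹ ((P (n - 1 - t)).inv_mem hy) (y * h * y⁻¹) hh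
          have heq : y⁻¹ * (y * h * y⁻¹) * y⁻¹⁻¹ = h := by group
          rwa [heq] at this
    have hPn1 : (P (n - 1)).Normal := by
      rw [← Subgroup.normalizer_eq_top_iff]
      rw [eq_top_iff]
      intro g _
      apply hNsub
      rw [← hX]
      exact hXtop g
    -- P n and P (n-1) are p-groups for distinct primes, both normal
    have hpn := hp n (by omega) le_rfl
    have hpn1 := hp (n - 1) (by omega) (by omega)
    have hpne' : p n ≠ p (n - 1) := by
      have := hpne (n - 1) (by omega) (by omega : (n - 1) + 1 ≤ n)
      have hn1 : n - 1 + 1 = n := by omega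
      rw [hn1] at this
      exact this
    haveI : Fact (p n).Prime := ⟨hpn.1⟩
    haveI : Fact (p (n - 1)).Prime := ⟨hpn1.1⟩
    have hdisj : Disjoint (P n) (P (n - 1)) :=
      IsPGroup.disjoint_of_ne (p n) (p (n - 1)) hpne' _ _ hpn.2 hpn1.2
    haveI := hnormal
    haveI := hPn1
    have hcb : ⁅P n, P (n - 1)⁆ = ⊥ := by
      have h1 : ⁅P n, P (n - 1)⁆ ≤ P n := Subgroup.commutator_le_left (P n) (P (n - 1))
      have h2 : ⁅P n, P (n - 1)⁆ ≤ P (n - 1) := Subgroup.commutator_le_right (P n) (P (n - 1))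
      exact le_bot_iff.mp (le_trans (le_inf h1 h2) (le_of_eq (disjoint_iff.mp hdisj)))
    have h3 := hcomm n hn le_rfl
    rw [hcb, hCn, bot_sup_eq] at h3
    exact hne h3.symm
end
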